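/- arXiv:2103.08460 — 5 statements merged into one kernel-verified Lean document; each statement's English description precedes it below -/
import Mathlib

section
/- For every partial permutation matrix τ of size p×r there exists a permutation w of {1,…,r} such that for every invertible upper triangular r×r complex matrix b there exists an invertible upper triangular p×p complex matrix b′ with τ P_w b = b′ τ P_w, where P_w denotes the r×r permutation matrix of w. -/
open scoped Classical
open Matrix

noncomputable section

/-- A partial permutation matrix: entries in `{0,1}`, at most one `1` in each row
and in each column. -/
def IsPartialPerm {m n : ℕ} (τ : Matrix (Fin m) (Fin n) ℂ) : Prop :=
  (∀ i j, τ i j = 0 ∨ τ i j = 1) ∧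
  (∀ i j j', τ i j = 1 → τ i j' = 1 → j = j') ∧
  (∀ i i' j, τ i j = 1 → τ i' j = 1 → i = i')

/-- The permutation matrix of `w`: `(P_w)_{i,j} = 1` iff `i = w j`. -/
def permMat {r : ℕ} (w : Equiv.Perm (Fin r)) : Matrix (Fin r) (Fin r) ℂ :=
  Matrix.of fun i j => if i = w j then 1 else 0

lemma mul_permMat_apply {p r : ℕ} (τ : Matrix (Fin p) (Fin r) ℂ) (w : Equiv.Perm (Fin r))
    (i : Fin p) (j : Fin r) : (τ * permMat w) i j = τ i (w j) := by
  simp [Matrix.mul_apply, permMat, mul_ite, Finset.sum_ite_eq']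

set_option maxHeartbeats 1000000 in
/-- for every partial permutation matrix `τ` there is a permutation `w`
with `τ P_w B_r⁺ ⊆ B_p⁺ τ P_w`. -/
theorem partial_perm_normalizes_borel (p r : ℕ) (τ : Matrix (Fin p) (Fin r) ℂ)
    (hτ : IsPartialPerm τ) :
    ∃ w : Equiv.Perm (Fin r),
      ∀ b : Matrix (Fin r) (Fin r) ℂ, IsUnit b → b.BlockTriangular id →
        ∃ b' : Matrix (Fin p) (Fin p) ℂ, IsUnit b' ∧ b'.BlockTriangular id ∧
          τ * permMat w * b = b' * (τ * permMat w) := by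
  obtain ⟨hzero, hrow, hcolu⟩ := hτ
  rcases Nat.eq_zero_or_pos r with hr | hr
  · subst hr
    exact ⟨1, fun b hb hbt => ⟨1, isUnit_one, Matrix.blockTriangular_one,
      by ext i j; exact j.elim0⟩⟩
  rcases Nat.eq_zero_or_pos p with hp | hp
  · subst hp
    exact ⟨1, fun b hb hbt => ⟨1, isUnit_one, Matrix.blockTriangular_one,
      by ext i j; exact i.elim0⟩⟩
  haveI irr : Inhabited (Fin r) := ⟨⟨0, hr⟩⟩
  haveI ipp : Inhabited (Fin p) := ⟨⟨0, hp⟩⟩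
  set T : Finset (Fin p) := Finset.univ.filter (fun i => ∃ j, τ i j = 1) with hTdef
  set S : Finset (Fin r) := Finset.univ.filter (fun j => ∃ i, τ i j = 1) with hSdef
  have hmemT : ∀ i : Fin p, i ∈ T ↔ ∃ j, τ i j = 1 := by
    intro i; simp [hTdef]
  have hmemS : ∀ j : Fin r, j ∈ S ↔ ∃ i, τ i j = 1 := by
    intro j; simp [hSdef]
  -- the column of a row in T
  obtain ⟨col, hcol⟩ : ∃ col : Fin p → Fin r, ∀ i ∈ T, τ i (col i) = 1 := by
    refine ⟨fun i => if h : ∃ j, τ i j = 1 then h.choose else default, ?_⟩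
    intro i hi
    rw [hmemT] at hi
    simp only [dif_pos hi]
    exact hi.choose_spec
  -- the row of a column in S
  obtain ⟨ρ, hρ⟩ : ∃ ρ : Fin r → Fin p, ∀ k ∈ S, τ (ρ k) k = 1 := by
    refine ⟨fun k => if h : ∃ i, τ i k = 1 then h.choose else default, ?_⟩
    intro k hk
    rw [hmemS] at hk
    simp only [dif_pos hk]
    exact hk.choose_spec
  have hcolS : ∀ i ∈ T, col i ∈ S := by
    intro i hi; rw [hmemS]; exact ⟨i, hcol i hi⟩
  set d := T.card with hdT
  have hcardST : S.card = d := by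
    rw [hdT]
    refine (Finset.card_bij (fun i _ => col i) ?_ ?_ ?_).symm
    · intro i hi; exact hcolS i hi
    · intro i hi i' hi' heq
      have h2 := hcol i' hi'
      rw [← heq] at h2
      exact hcolu i i' (col i) (hcol i hi) h2
    · intro j hj
      rw [hmemS] at hj
      obtain ⟨i, hij⟩ := hj
      have hiT : i ∈ T := (hmemT i).mpr ⟨j, hij⟩
      exact ⟨i, hiT, (hrow i (col i) j (hcol i hiT) hij)⟩
  have hdle : d ≤ r := by
    rw [← hcardST]
    simpa using Finset.card_le_univ S
  have hScompl : Sᶜ.card = r - d := by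
    rw [Finset.card_compl, Fintype.card_fin, hcardST]
  -- the permutation
  set ψ : Fin r → Fin r := fun j =>
    if h : r - d ≤ (j : ℕ) then
      (T.orderIsoOfFin hdT.symm ⟨(j : ℕ) - (r - d), by have := j.isLt; omega⟩ : Fin p) |> col
    else
      ((Sᶜ.orderIsoOfFin hScompl ⟨(j : ℕ), by omega⟩ : Fin r)) with hψdef
  have hψtop : ∀ (j : Fin r) (h : r - d ≤ (j : ℕ)),
      ψ j = col (T.orderIsoOfFin hdT.symm ⟨(j : ℕ) - (r - d), by have := j.isLt; omega⟩ : Fin p) := by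
    intro j h
    simp only [hψdef, dif_pos h]
  have hψbot : ∀ (j : Fin r) (h : ¬ r - d ≤ (j : ℕ)),
      ψ j = (Sᶜ.orderIsoOfFin hScompl ⟨(j : ℕ), by omega⟩ : Fin r) := by
    intro j h
    simp only [hψdef, dif_neg h]
  have hψmemS : ∀ j : Fin r, r - d ≤ (j : ℕ) → ψ j ∈ S := by
    intro j h
    rw [hψtop j h]
    exact hcolS _ (T.orderIsoOfFin hdT.symm _).2
  have hψmemSc : ∀ j : Fin r, ¬ r - d ≤ (j : ℕ) → ψ j ∈ Sᶜ := by
    intro j h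
    rw [hψbot j h]
    exact (Sᶜ.orderIsoOfFin hScompl _).2
  have hψinj : Function.Injective ψ := by
    intro j1 j2 heq
    by_cases h1 : r - d ≤ (j1 : ℕ) <;> by_cases h2 : r - d ≤ (j2 : ℕ)
    · rw [hψtop j1 h1, hψtop j2 h2] at heq
      have h1' := hcol _ (T.orderIsoOfFin hdT.symm
        ⟨(j1 : ℕ) - (r - d), by have := j1.isLt; omega⟩).2
      have h2' := hcol _ (T.orderIsoOfFin hdT.symm
        ⟨(j2 : ℕ) - (r - d), by have := j2.isLt; omega⟩).2
      rw [heq] at h1'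
      have he := hcolu _ _ _ h1' h2'
      have hinj := (T.orderIsoOfFin hdT.symm).injective (Subtype.ext he)
      simp only [Fin.mk.injEq] at hinj
      exact Fin.ext (by omega)
    · exfalso
      have hs := hψmemS j1 h1
      have hsc := hψmemSc j2 h2
      rw [heq] at hs
      exact (Finset.mem_compl.mp hsc) hs
    · exfalso
      have hs := hψmemS j2 h2
      have hsc := hψmemSc j1 h1
      rw [← heq] at hs
      exact (Finset.mem_compl.mp hsc) hs
    · rw [hψbot j1 h1, hψbot j2 h2] at heq
      have hinj := (Sᶜ.orderIsoOfFin hScompl).injective (Subtype.ext heq)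
      simp only [Fin.mk.injEq] at hinj
      exact Fin.ext hinj
  set w : Equiv.Perm (Fin r) := Equiv.ofBijective ψ (Finite.injective_iff_bijective.mp hψinj)
    with hwdef
  have hwapp : ∀ j, w j = ψ j := fun j => rfl
  have hwS : ∀ j : Fin r, w j ∈ S ↔ r - d ≤ (j : ℕ) := by
    intro j
    constructor
    · intro hs
      by_contra h
      exact (Finset.mem_compl.mp (hψmemSc j h)) (hwapp j ▸ hs)
    · intro h; rw [hwapp]; exact hψmemS j h
  refine ⟨w, ?_⟩
  intro b hb hbt
  set F : Fin p → Fin r := fun i => w.symm (col i) with hFdef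
  have hFt : ∀ (t : ℕ) (ht : t < d),
      F (T.orderIsoOfFin hdT.symm ⟨t, ht⟩ : Fin p) = ⟨r - d + t, by omega⟩ := by
    intro t ht
    rw [hFdef]
    rw [Equiv.symm_apply_eq, hwapp, hψtop ⟨r - d + t, by omega⟩ (Nat.le_add_right (r - d) t)]
    have hcongr : ∀ (a c : Fin d), a = c →
        col ((T.orderIsoOfFin hdT.symm a : Fin p)) = col ((T.orderIsoOfFin hdT.symm c : Fin p)) := by
      intro a c h; rw [h]
    exact hcongr _ _ (Fin.ext (by show t = r - d + t - (r - d); omega))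
  have hFspec : ∀ i ∈ T, ∃ (t : ℕ) (ht : t < d),
      i = (T.orderIsoOfFin hdT.symm ⟨t, ht⟩ : Fin p) ∧ (F i : ℕ) = r - d + t := by
    intro i hi
    obtain ⟨t, hts⟩ := (T.orderIsoOfFin hdT.symm).surjective ⟨i, hi⟩
    have hiv : (T.orderIsoOfFin hdT.symm t : Fin p) = i := congrArg Subtype.val hts
    refine ⟨(t : ℕ), t.isLt, ?_, ?_⟩
    · rw [← hiv]
    · rw [← hiv, hFt (t : ℕ) t.isLt]
  have hFge : ∀ i ∈ T, r - d ≤ (F i : ℕ) := by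
    intro i hi
    obtain ⟨t, ht, _, hv⟩ := hFspec i hi
    omega
  have hFmono : ∀ i ∈ T, ∀ i' ∈ T, i < i' → F i < F i' := by
    intro i hi i' hi' hlt
    obtain ⟨t, ht, hieq, hv⟩ := hFspec i hi
    obtain ⟨t', ht', hieq', hv'⟩ := hFspec i' hi'
    have htt : t < t' := by
      by_contra hc
      push_neg at hc
      have : (⟨t', ht'⟩ : Fin d) ≤ ⟨t, ht⟩ := hc
      have := (T.orderIsoOfFin hdT.symm).le_iff_le.mpr this
      have : i' ≤ i := by
        rw [hieq, hieq']
        exact this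
      exact absurd hlt (not_lt.mpr this)
    rw [Fin.lt_def]
    omega
  -- facts about τ entries
  have hτrow : ∀ (i : Fin p) (j : Fin r), τ i j = if i ∈ T ∧ j = col i then 1 else 0 := by
    intro i j
    rcases hzero i j with h0 | h1
    · rw [h0]
      by_cases h : i ∈ T ∧ j = col i
      · exfalso
        have := hcol i h.1
        rw [← h.2, h0] at this
        exact zero_ne_one this
      · rw [if_neg h]
    · rw [h1, if_pos]
      have hiT : i ∈ T := (hmemT i).mpr ⟨j, h1⟩
      exact ⟨hiT, hrow i j (col i) h1 (hcol i hiT)⟩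
  have hτcolS : ∀ (i : Fin p) (k : Fin r), k ∈ S → τ i k = if i = ρ k then 1 else 0 := by
    intro i k hk
    rcases hzero i k with h0 | h1
    · rw [h0, if_neg]
      intro he
      have := hρ k hk
      rw [← he, h0] at this
      exact zero_ne_one this
    · rw [h1, if_pos (hcolu i (ρ k) k h1 (hρ k hk))]
  have hτnotS : ∀ (i : Fin p) (k : Fin r), k ∉ S → τ i k = 0 := by
    intro i k hk
    rcases hzero i k with h0 | h1
    · exact h0
    · exact absurd ((hmemS k).mpr ⟨i, h1⟩) hk
  have hρT : ∀ k ∈ S, ρ k ∈ T := by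
    intro k hk; exact (hmemT _).mpr ⟨k, hρ k hk⟩
  have hcolρ : ∀ k ∈ S, col (ρ k) = k := by
    intro k hk
    exact hrow (ρ k) (col (ρ k)) k (hcol _ (hρT k hk)) (hρ k hk)
  -- diagonal of b is nonzero
  have hdetb : b.det ≠ 0 := by
    intro h
    have := (Matrix.isUnit_iff_isUnit_det b).mp hb
    rw [h] at this
    exact this.ne_zero rfl
  have hbdiag : ∀ j, b j j ≠ 0 := by
    intro j hj
    apply hdetb
    rw [Matrix.det_of_upperTriangular hbt]
    exact Finset.prod_eq_zero (Finset.mem_univ j) hj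
  -- construct b'
  set b' : Matrix (Fin p) (Fin p) ℂ := Matrix.of fun i i' =>
    if i ∈ T ∧ i' ∈ T then b (F i) (F i') else if i = i' then (1 : ℂ) else 0 with hb'def
  have hb'app : ∀ i i', b' i i' =
      if i ∈ T ∧ i' ∈ T then b (F i) (F i') else if i = i' then (1 : ℂ) else 0 := by
    intro i i'; rfl
  have htri : b'.BlockTriangular id := by
    intro i i' hlt
    simp only [id_eq] at hlt
    rw [hb'app]
    by_cases h : i ∈ T ∧ i' ∈ T
    · rw [if_pos h]
      exact hbt (hFmono i' h.2 i h.1 hlt)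
    · rw [if_neg h, if_neg (ne_of_gt hlt)]
  have hunit : IsUnit b' := by
    rw [Matrix.isUnit_iff_isUnit_det, isUnit_iff_ne_zero, Matrix.det_of_upperTriangular htri]
    rw [Finset.prod_ne_zero_iff]
    intro i _
    rw [hb'app]
    by_cases h : i ∈ T
    · rw [if_pos ⟨h, h⟩]; exact hbdiag _
    · rw [if_neg (by tauto), if_pos rfl]; exact one_ne_zero
  refine ⟨b', hunit, htri, ?_⟩
  ext i k
  -- LHS
  have hL : (τ * permMat w * b) i k = if i ∈ T then b (F i) k else 0 := by
    rw [Matrix.mul_apply]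
    simp only [mul_permMat_apply]
    rw [← Equiv.sum_comp w.symm (fun j => τ i (w j) * b j k)]
    simp only [Equiv.apply_symm_apply]
    by_cases hi : i ∈ T
    · rw [if_pos hi]
      have : ∀ j : Fin r, τ i j * b (w.symm j) k = if j = col i then b (w.symm j) k else 0 := by
        intro j
        rw [hτrow i j]
        by_cases hj : j = col i
        · rw [if_pos ⟨hi, hj⟩, if_pos hj, one_mul]
        · rw [if_neg (by tauto), if_neg hj, zero_mul]
      simp only [this]
      rw [Finset.sum_ite_eq' Finset.univ (col i) (fun j => b (w.symm j) k)]
      rw [if_pos (Finset.mem_univ _)]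
    · rw [if_neg hi]
      apply Finset.sum_eq_zero
      intro j _
      rw [hτrow i j, if_neg (by tauto), zero_mul]
  -- RHS
  have hR : (b' * (τ * permMat w)) i k = if w k ∈ S then b' i (ρ (w k)) else 0 := by
    rw [Matrix.mul_apply]
    simp only [mul_permMat_apply]
    by_cases hk : w k ∈ S
    · rw [if_pos hk]
      have : ∀ i' : Fin p, b' i i' * τ i' (w k) = if i' = ρ (w k) then b' i i' else 0 := by
        intro i'
        rw [hτcolS i' (w k) hk]
        by_cases hj : i' = ρ (w k)
        · rw [if_pos hj, if_pos hj, mul_one]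
        · rw [if_neg hj, if_neg hj, mul_zero]
      simp only [this]
      rw [Finset.sum_ite_eq' Finset.univ (ρ (w k)) (fun i' => b' i i')]
      rw [if_pos (Finset.mem_univ _)]
    · rw [if_neg hk]
      apply Finset.sum_eq_zero
      intro i' _
      rw [hτnotS i' (w k) hk, mul_zero]
  rw [hL, hR]
  by_cases hk : w k ∈ S <;> by_cases hi : i ∈ T
  · rw [if_pos hk, if_pos hi, hb'app, if_pos ⟨hi, hρT _ hk⟩]
    have hFk : F (ρ (w k)) = k := by
      rw [hFdef]
      show w.symm (col (ρ (w k))) = k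
      rw [hcolρ _ hk, Equiv.symm_apply_apply]
    rw [hFk]
  · rw [if_pos hk, if_neg hi, hb'app, if_neg (by tauto), if_neg]
    intro he
    exact hi (he ▸ hρT _ hk)
  · rw [if_neg hk, if_pos hi]
    apply hbt
    show (k : ℕ) < (F i : ℕ)
    have h1 := hFge i hi
    have h2 : ¬ r - d ≤ (k : ℕ) := fun h => hk ((hwS k).mpr h)
    omega
  · rw [if_neg hk, if_neg hi]
end
end

section
/- Let ω, ω′ ∈ 𝕋. If r_{i,j}(ω) = r_{i,j}(ω′) for all 0 ≤ i ≤ p and 0 ≤ j ≤ q, then ω′ = ω P for some r×r permutation matrix P. -/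
open scoped Classical
open Matrix

noncomputable section

/-- `(p+q) × r` complex matrices, rows indexed by `Fin p ⊕ Fin q`. -/
abbrev MatT (p q r : ℕ) := Matrix (Fin p ⊕ Fin q) (Fin r) ℂ

/-- The set `𝕋`: `(p+q) × r` matrices of rank `r` whose top `p × r` and bottom
`q × r` blocks are partial permutation matrices. -/
def InT {p q r : ℕ} (ω : MatT p q r) : Prop :=
  ω.rank = r ∧
  IsPartialPerm (Matrix.of fun (i : Fin p) (c : Fin r) => ω (Sum.inl i) c) ∧
  IsPartialPerm (Matrix.of fun (j : Fin q) (c : Fin r) => ω (Sum.inr j) c)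

/-- `[ω]`, the column space of `ω`, as a subspace of `ℂ^{p+q}`. -/
def colSpace {p q r : ℕ} (ω : MatT p q r) : Submodule ℂ (Fin p ⊕ Fin q → ℂ) :=
  LinearMap.range ω.mulVecLin

/-- `r_{i,j}(ω)`: the number of columns of `ω` all of whose nonzero entries lie in
rows `{1,…,i} ∪ {p+1,…,p+j}`. -/
def rij {p q r : ℕ} (ω : MatT p q r) (i j : ℕ) : ℕ :=
  Nat.card {c : Fin r // (∀ k : Fin p, ω (Sum.inl k) c ≠ 0 → (k : ℕ) < i) ∧
    (∀ k : Fin q, ω (Sum.inr k) c ≠ 0 → (k : ℕ) < j)}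

namespace RijAux

variable {p q r : ℕ}

/-- Code of the top nonzero row of column `c` (0 if none, `k+1` if row `k`). -/
def colA (ω : MatT p q r) (c : Fin r) : ℕ :=
  if h : ∃ k : Fin p, ω (Sum.inl k) c = 1 then (h.choose : ℕ) + 1 else 0

/-- Code of the bottom nonzero row of column `c`. -/
def colB (ω : MatT p q r) (c : Fin r) : ℕ :=
  if h : ∃ k : Fin q, ω (Sum.inr k) c = 1 then (h.choose : ℕ) + 1 else 0

lemma colA_spec {ω : MatT p q r}
    (hτ : IsPartialPerm (Matrix.of fun (i : Fin p) (c : Fin r) => ω (Sum.inl i) c))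
    (c : Fin r) (k : Fin p) :
    ω (Sum.inl k) c = 1 ↔ colA ω c = (k : ℕ) + 1 := by
  constructor
  · intro hk
    have hex : ∃ k : Fin p, ω (Sum.inl k) c = 1 := ⟨k, hk⟩
    rw [colA, dif_pos hex]
    have hu : hex.choose = k := hτ.2.2 hex.choose k c hex.choose_spec hk
    rw [hu]
  · intro hA
    rw [colA] at hA
    by_cases hex : ∃ k : Fin p, ω (Sum.inl k) c = 1
    · rw [dif_pos hex] at hA
      have hu : hex.choose = k := Fin.ext (by omega)
      rw [← hu]; exact hex.choose_spec
    · rw [dif_neg hex] at hA; omega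

lemma colB_spec {ω : MatT p q r}
    (hτ : IsPartialPerm (Matrix.of fun (j : Fin q) (c : Fin r) => ω (Sum.inr j) c))
    (c : Fin r) (k : Fin q) :
    ω (Sum.inr k) c = 1 ↔ colB ω c = (k : ℕ) + 1 := by
  constructor
  · intro hk
    have hex : ∃ k : Fin q, ω (Sum.inr k) c = 1 := ⟨k, hk⟩
    rw [colB, dif_pos hex]
    have hu : hex.choose = k := hτ.2.2 hex.choose k c hex.choose_spec hk
    rw [hu]
  · intro hA
    rw [colB] at hA
    by_cases hex : ∃ k : Fin q, ω (Sum.inr k) c = 1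
    · rw [dif_pos hex] at hA
      have hu : hex.choose = k := Fin.ext (by omega)
      rw [← hu]; exact hex.choose_spec
    · rw [dif_neg hex] at hA; omega

lemma colA_le {ω : MatT p q r} (c : Fin r) : colA ω c ≤ p := by
  rw [colA]
  split
  · next h => exact Nat.succ_le_of_lt h.choose.isLt
  · omega

lemma colB_le {ω : MatT p q r} (c : Fin r) : colB ω c ≤ q := by
  rw [colB]
  split
  · next h => exact Nat.succ_le_of_lt h.choose.isLt
  · omega

lemma topCond_iff {ω : MatT p q r} (hω : InT ω) (c : Fin r) (i : ℕ) :
    (∀ k : Fin p, ω (Sum.inl k) c ≠ 0 → (k : ℕ) < i) ↔ colA ω c ≤ i := by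
  constructor
  · intro H
    by_cases hex : ∃ k : Fin p, ω (Sum.inl k) c = 1
    · rw [colA, dif_pos hex]
      have := H hex.choose (by rw [hex.choose_spec]; exact one_ne_zero)
      omega
    · rw [colA, dif_neg hex]; omega
  · intro H k hk
    rcases hω.2.1.1 k c with h0 | h1
    · exact absurd h0 hk
    · have := (colA_spec hω.2.1 c k).1 h1
      omega

lemma botCond_iff {ω : MatT p q r} (hω : InT ω) (c : Fin r) (j : ℕ) :
    (∀ k : Fin q, ω (Sum.inr k) c ≠ 0 → (k : ℕ) < j) ↔ colB ω c ≤ j := by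
  constructor
  · intro H
    by_cases hex : ∃ k : Fin q, ω (Sum.inr k) c = 1
    · rw [colB, dif_pos hex]
      have := H hex.choose (by rw [hex.choose_spec]; exact one_ne_zero)
      omega
    · rw [colB, dif_neg hex]; omega
  · intro H k hk
    rcases hω.2.2.1 k c with h0 | h1
    · exact absurd h0 hk
    · have := (colB_spec hω.2.2 c k).1 h1
      omega

lemma rij_eq {ω : MatT p q r} (hω : InT ω) (i j : ℕ) :
    rij ω i j = (Finset.univ.filter fun c => colA ω c ≤ i ∧ colB ω c ≤ j).card := by
  rw [rij, Nat.card_eq_fintype_card, Fintype.card_subtype]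
  apply Finset.card_bij (fun c _ => c) ?_ (fun _ _ _ _ h => h) ?_
  · intro c hc
    simp only [Finset.mem_filter, Finset.mem_univ, true_and] at hc ⊢
    exact ⟨(topCond_iff hω c i).1 hc.1, (botCond_iff hω c j).1 hc.2⟩
  · intro c hc
    refine ⟨c, ?_, rfl⟩
    simp only [Finset.mem_filter, Finset.mem_univ, true_and] at hc ⊢
    exact ⟨(topCond_iff hω c i).2 hc.1, (botCond_iff hω c j).2 hc.2⟩

lemma col_ne_zero {ω : MatT p q r} (hω : InT ω) (c : Fin r) :
    ¬ (colA ω c = 0 ∧ colB ω c = 0) := by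
  rintro ⟨hA, hB⟩
  have hcol : ∀ x, ω x c = 0 := by
    rintro (k | k)
    · rcases hω.2.1.1 k c with h0 | h1
      · exact h0
      · have := (colA_spec hω.2.1 c k).1 h1; omega
    · rcases hω.2.2.1 k c with h0 | h1
      · exact h0
      · have := (colB_spec hω.2.2 c k).1 h1; omega
  have hker : LinearMap.ker ω.mulVecLin = ⊥ := by
    have h1 := LinearMap.finrank_range_add_finrank_ker ω.mulVecLin
    have h2 : Module.finrank ℂ (Fin r → ℂ) = r := by simp
    have h3 := hω.1
    rw [Matrix.rank] at h3
    have h0 : Module.finrank ℂ (LinearMap.ker ω.mulVecLin) = 0 := by omega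
    exact Submodule.finrank_eq_zero.mp h0
  have hz : ω.mulVecLin (Pi.single c 1) = ω.mulVecLin 0 := by
    rw [map_zero]
    ext x
    simp [Matrix.mulVecLin_apply, hcol]
  have hz2 : Pi.single c 1 = (0 : Fin r → ℂ) := (LinearMap.ker_eq_bot.mp hker) hz
  have := congrFun hz2 c
  simp at this

lemma type_inj {ω : MatT p q r} (hω : InT ω) {c c' : Fin r}
    (hA : colA ω c = colA ω c') (hB : colB ω c = colB ω c') : c = c' := by
  by_cases hex : ∃ k : Fin p, ω (Sum.inl k) c = 1
  · obtain ⟨k, hk⟩ := hex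
    have h1 : colA ω c = (k : ℕ) + 1 := (colA_spec hω.2.1 c k).1 hk
    have h2 : ω (Sum.inl k) c' = 1 := (colA_spec hω.2.1 c' k).2 (by omega)
    exact hω.2.1.2.1 k c c' hk h2
  · by_cases hex' : ∃ k : Fin q, ω (Sum.inr k) c = 1
    · obtain ⟨k, hk⟩ := hex'
      have h1 : colB ω c = (k : ℕ) + 1 := (colB_spec hω.2.2 c k).1 hk
      have h2 : ω (Sum.inr k) c' = 1 := (colB_spec hω.2.2 c' k).2 (by omega)
      exact hω.2.2.2.1 k c c' hk h2
    · exfalso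
      apply col_ne_zero hω c
      constructor
      · rw [colA, dif_neg hex]
      · rw [colB, dif_neg hex']

/-- Cumulative count `#{c : colA ≤ a, colB ≤ b}`. -/
def cntF (ω : MatT p q r) (a b : ℕ) : ℕ :=
  (Finset.univ.filter fun c => colA ω c ≤ a ∧ colB ω c ≤ b).card

def cntU (ω : MatT p q r) (a b : ℕ) : ℕ :=
  (Finset.univ.filter fun c => colA ω c = a ∧ colB ω c ≤ b).card

def cntI (ω : MatT p q r) (a b : ℕ) : ℕ :=
  (Finset.univ.filter fun c => colA ω c = a ∧ colB ω c = b).card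

lemma cntF_split (ω : MatT p q r) (a b : ℕ) :
    cntF ω (a + 1) b = cntF ω a b + cntU ω (a + 1) b := by
  rw [cntF, cntF, cntU]
  have h1 : (Finset.univ.filter fun c => colA ω c ≤ a + 1 ∧ colB ω c ≤ b) =
      (Finset.univ.filter fun c =>
        (colA ω c ≤ a ∧ colB ω c ≤ b) ∨ (colA ω c = a + 1 ∧ colB ω c ≤ b)) := by
    apply Finset.filter_congr
    intro c _
    constructor
    · rintro ⟨h1, h2⟩; omega
    · rintro (⟨h1, h2⟩ | ⟨h1, h2⟩) <;> omega
  rw [h1, Finset.filter_or, Finset.card_union_of_disjoint]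
  rw [Finset.disjoint_left]
  intro c hc hc'
  simp only [Finset.mem_filter, Finset.mem_univ, true_and] at hc hc'
  omega

lemma cntU_split (ω : MatT p q r) (a b : ℕ) :
    cntU ω a (b + 1) = cntU ω a b + cntI ω a (b + 1) := by
  rw [cntU, cntU, cntI]
  have h1 : (Finset.univ.filter fun c => colA ω c = a ∧ colB ω c ≤ b + 1) =
      (Finset.univ.filter fun c =>
        (colA ω c = a ∧ colB ω c ≤ b) ∨ (colA ω c = a ∧ colB ω c = b + 1)) := by
    apply Finset.filter_congr
    intro c _
    constructor
    · rintro ⟨h1, h2⟩; omega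
    · rintro (⟨h1, h2⟩ | ⟨h1, h2⟩) <;> omega
  rw [h1, Finset.filter_or, Finset.card_union_of_disjoint]
  rw [Finset.disjoint_left]
  intro c hc hc'
  simp only [Finset.mem_filter, Finset.mem_univ, true_and] at hc hc'
  omega

lemma cntU_zero (ω : MatT p q r) (b : ℕ) : cntU ω 0 b = cntF ω 0 b := by
  rw [cntU, cntF]
  congr 1
  apply Finset.filter_congr
  intro c _
  constructor
  · rintro ⟨h1, h2⟩; omega
  · rintro ⟨h1, h2⟩; omega

lemma cntI_zero (ω : MatT p q r) (a : ℕ) : cntI ω a 0 = cntU ω a 0 := by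
  rw [cntU, cntI]
  congr 1
  apply Finset.filter_congr
  intro c _
  constructor
  · rintro ⟨h1, h2⟩; omega
  · rintro ⟨h1, h2⟩; omega

end RijAux

open RijAux in
/-- the matrix of invariants `r_{i,j}` determines `ω ∈ 𝕋` up to a
permutation of its columns. -/
theorem rij_determines_omega (p q r : ℕ) (hr : r ≤ p + q) (ω ω' : MatT p q r)
    (hω : InT ω) (hω' : InT ω')
    (h : ∀ i ≤ p, ∀ j ≤ q, rij ω i j = rij ω' i j) :
    ∃ w : Equiv.Perm (Fin r), ω' = ω * permMat w := by
  have hF : ∀ a ≤ p, ∀ b ≤ q, cntF ω a b = cntF ω' a b := by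
    intro a ha b hb
    have := h a ha b hb
    rwa [rij_eq hω, rij_eq hω'] at this
  have hU : ∀ a ≤ p, ∀ b ≤ q, cntU ω a b = cntU ω' a b := by
    intro a
    induction a with
    | zero =>
      intro _ b hb
      rw [cntU_zero, cntU_zero, hF 0 (Nat.zero_le _) b hb]
    | succ a ih =>
      intro ha b hb
      have h1 := cntF_split ω a b
      have h2 := cntF_split ω' a b
      have hFa := hF a (by omega) b hb
      have hFa1 := hF (a + 1) ha b hb
      omega
  have hI : ∀ a ≤ p, ∀ b ≤ q, cntI ω a b = cntI ω' a b := by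
    intro a ha b
    induction b with
    | zero =>
      intro _
      rw [cntI_zero, cntI_zero, hU a ha 0 (Nat.zero_le _)]
    | succ b ih =>
      intro hb
      have h1 := cntU_split ω a b
      have h2 := cntU_split ω' a b
      have hUb := hU a ha b (by omega)
      have hUb1 := hU a ha (b + 1) hb
      omega
  -- existence transfer
  have hEx : ∀ c' : Fin r, ∃ c : Fin r, colA ω c = colA ω' c' ∧ colB ω c = colB ω' c' := by
    intro c'
    have ha : colA ω' c' ≤ p := colA_le c'
    have hb : colB ω' c' ≤ q := colB_le c'
    have hIe := hI (colA ω' c') ha (colB ω' c') hb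
    have hne' : (Finset.univ.filter fun c =>
        colA ω' c = colA ω' c' ∧ colB ω' c = colB ω' c').Nonempty :=
      ⟨c', by simp⟩
    have hpos : 0 < cntI ω' (colA ω' c') (colB ω' c') := by
      rw [cntI]
      exact Finset.card_pos.mpr hne'
    have hposω : 0 < cntI ω (colA ω' c') (colB ω' c') := by omega
    rw [cntI] at hposω
    obtain ⟨c, hc⟩ := Finset.card_pos.mp hposω
    simp only [Finset.mem_filter, Finset.mem_univ, true_and] at hc
    exact ⟨c, hc⟩
  set f : Fin r → Fin r := fun c' => (hEx c').choose with hfdef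
  have hf : ∀ c', colA ω (f c') = colA ω' c' ∧ colB ω (f c') = colB ω' c' :=
    fun c' => (hEx c').choose_spec
  have finj : Function.Injective f := by
    intro c1 c2 he
    apply type_inj hω'
    · rw [← (hf c1).1, ← (hf c2).1, he]
    · rw [← (hf c1).2, ← (hf c2).2, he]
  refine ⟨Equiv.ofBijective f (Finite.injective_iff_bijective.mp finj), ?_⟩
  ext x c'
  rw [Matrix.mul_apply]
  have hsum : ∑ k, ω x k * permMat (Equiv.ofBijective f (Finite.injective_iff_bijective.mp finj)) k c' = ω x (f c') := by
    simp only [permMat, Matrix.of_apply, Equiv.ofBijective_apply, mul_ite, mul_one, mul_zero]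
    rw [Finset.sum_ite_eq' Finset.univ (f c') (fun k => ω x k)]
    simp
  rw [hsum]
  obtain ⟨hA, hB⟩ := hf c'
  cases x with
  | inl k =>
    rcases hω'.2.1.1 k c' with h0 | h1
    · replace h0 : ω' (Sum.inl k) c' = 0 := h0
      rcases hω.2.1.1 k (f c') with g0 | g1
      · replace g0 : ω (Sum.inl k) (f c') = 0 := g0
        rw [h0, g0]
      · exfalso
        replace g1 : ω (Sum.inl k) (f c') = 1 := g1
        have hg := (colA_spec hω.2.1 (f c') k).1 g1
        rw [hA] at hg
        have := (colA_spec hω'.2.1 c' k).2 hg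
        rw [h0] at this
        exact zero_ne_one this
    · replace h1 : ω' (Sum.inl k) c' = 1 := h1
      have h2 := (colA_spec hω'.2.1 c' k).1 h1
      have h3 : colA ω (f c') = (k : ℕ) + 1 := by rw [hA, h2]
      have := (colA_spec hω.2.1 (f c') k).2 h3
      rw [h1, this]
  | inr k =>
    rcases hω'.2.2.1 k c' with h0 | h1
    · replace h0 : ω' (Sum.inr k) c' = 0 := h0
      rcases hω.2.2.1 k (f c') with g0 | g1
      · replace g0 : ω (Sum.inr k) (f c') = 0 := g0
        rw [h0, g0]
      · exfalso
        replace g1 : ω (Sum.inr k) (f c') = 1 := g1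
        have hg := (colB_spec hω.2.2 (f c') k).1 g1
        rw [hB] at hg
        have := (colB_spec hω'.2.2 c' k).2 hg
        rw [h0] at this
        exact zero_ne_one this
    · replace h1 : ω' (Sum.inr k) c' = 1 := h1
      have h2 := (colB_spec hω'.2.2 c' k).1 h1
      have h3 : colB ω (f c') = (k : ℕ) + 1 := by rw [hB, h2]
      have := (colB_spec hω.2.2 (f c') k).2 h3
      rw [h1, this]
end
end

section
/- Let ω ∈ 𝕋 and let O_ω denote the K-orbit of the triple ([ω], 𝔉₀⁺, 𝔉₀⁻) under the diagonal action of K on triples (W, 𝔉⁺, 𝔉⁻), where W ranges over r-dimensional subspaces of ℂ^{p+q}, 𝔉⁺ over complete flags of V⁺, and 𝔉⁻ over complete flags of V⁻. Then a triple (W, 𝔉⁺ = (F_i⁺)_{i=0}^p, 𝔉⁻ = (F_j⁻)_{j=0}^q) lies in O_ω if and only if dim(W ∩ (F_i⁺ + F_j⁻)) = r_{i,j}(ω) for all 0 ≤ i ≤ p and 0 ≤ j ≤ q. -/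
open scoped Classical
open Matrix

noncomputable section

/-- The standard subspace spanned by `e₁,…,e_i` (first `i` vectors of the standard
basis of `V⁺`). -/
def stdPlus (p q : ℕ) (i : ℕ) : Submodule ℂ (Fin p ⊕ Fin q → ℂ) :=
  Submodule.span ℂ {v | ∃ k : Fin p, (k : ℕ) < i ∧ v = Pi.single (Sum.inl k) 1}

/-- The standard subspace spanned by `e_{p+1},…,e_{p+j}` (first `j` vectors of the
standard basis of `V⁻`). -/
def stdMinus (p q : ℕ) (j : ℕ) : Submodule ℂ (Fin p ⊕ Fin q → ℂ) :=
  Submodule.span ℂ {v | ∃ k : Fin q, (k : ℕ) < j ∧ v = Pi.single (Sum.inr k) 1}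

/-- A complete flag `0 = F 0 ⊂ F 1 ⊂ … ⊂ F n = V` with `dim F i = i`. -/
def IsCompleteFlag {p q : ℕ} (n : ℕ) (V : Submodule ℂ (Fin p ⊕ Fin q → ℂ))
    (F : ℕ → Submodule ℂ (Fin p ⊕ Fin q → ℂ)) : Prop :=
  (∀ i j, i ≤ j → j ≤ n → F i ≤ F j) ∧
  (∀ i ≤ n, Module.finrank ℂ ↥(F i) = i) ∧ F n = V

section Aux

variable {p q r : ℕ}

private lemma single_eq_smul (s : Fin p ⊕ Fin q) (c : ℂ) :
    (Pi.single s c : Fin p ⊕ Fin q → ℂ) = c • (Pi.single s (1:ℂ) : Fin p ⊕ Fin q → ℂ) := by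
  funext t
  by_cases h : t = s
  · subst h; simp
  · simp [Pi.single_apply, h]

private lemma mem_sup_of_supp {i j : ℕ} {x : Fin p ⊕ Fin q → ℂ}
    (hp : ∀ k : Fin p, x (Sum.inl k) ≠ 0 → (k : ℕ) < i)
    (hq : ∀ k : Fin q, x (Sum.inr k) ≠ 0 → (k : ℕ) < j) :
    x ∈ stdPlus p q i ⊔ stdMinus p q j := by
  have hx : x = ∑ s : Fin p ⊕ Fin q, Pi.single s (x s) := (Finset.univ_sum_single x).symm
  rw [hx]
  refine Submodule.sum_mem _ fun s _ => ?_
  rcases s with k | k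
  · by_cases h : x (Sum.inl k) = 0
    · rw [h, Pi.single_zero]; exact Submodule.zero_mem _
    · refine Submodule.mem_sup_left ?_
      rw [single_eq_smul]
      exact Submodule.smul_mem _ _ (Submodule.subset_span ⟨k, hp k h, rfl⟩)
  · by_cases h : x (Sum.inr k) = 0
    · rw [h, Pi.single_zero]; exact Submodule.zero_mem _
    · refine Submodule.mem_sup_right ?_
      rw [single_eq_smul]
      exact Submodule.smul_mem _ _ (Submodule.subset_span ⟨k, hq k h, rfl⟩)

private lemma supp_of_mem_sup {i j : ℕ} {x : Fin p ⊕ Fin q → ℂ}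
    (hx : x ∈ stdPlus p q i ⊔ stdMinus p q j) :
    (∀ k : Fin p, i ≤ (k : ℕ) → x (Sum.inl k) = 0) ∧
    (∀ k : Fin q, j ≤ (k : ℕ) → x (Sum.inr k) = 0) := by
  set Z : Submodule ℂ (Fin p ⊕ Fin q → ℂ) :=
    { carrier := {y | (∀ k : Fin p, i ≤ (k : ℕ) → y (Sum.inl k) = 0) ∧
        (∀ k : Fin q, j ≤ (k : ℕ) → y (Sum.inr k) = 0)}
      add_mem' := fun ha hb => ⟨fun k hk => by
          simp only [Pi.add_apply, ha.1 k hk, hb.1 k hk, add_zero],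
        fun k hk => by simp only [Pi.add_apply, ha.2 k hk, hb.2 k hk, add_zero]⟩
      zero_mem' := ⟨fun _ _ => rfl, fun _ _ => rfl⟩
      smul_mem' := fun c y hy => ⟨fun k hk => by
          simp only [Pi.smul_apply, hy.1 k hk, smul_zero],
        fun k hk => by simp only [Pi.smul_apply, hy.2 k hk, smul_zero]⟩ } with hZ
  have h1 : stdPlus p q i ⊔ stdMinus p q j ≤ Z := by
    refine sup_le (Submodule.span_le.mpr ?_) (Submodule.span_le.mpr ?_)
    · rintro v ⟨k, hk, rfl⟩
      refine ⟨fun k' hk' => ?_, fun k' _ => ?_⟩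
      · have : (Sum.inl k' : Fin p ⊕ Fin q) ≠ Sum.inl k := by
          simp only [ne_eq, Sum.inl.injEq]
          intro h; subst h; omega
        simp [Pi.single_apply, this]
      · simp [Pi.single_apply]
    · rintro v ⟨k, hk, rfl⟩
      refine ⟨fun k' _ => ?_, fun k' hk' => ?_⟩
      · simp [Pi.single_apply]
      · have : (Sum.inr k' : Fin p ⊕ Fin q) ≠ Sum.inr k := by
          simp only [ne_eq, Sum.inr.injEq]
          intro h; subst h; omega
        simp [Pi.single_apply, this]
  exact h1 hx

private lemma stdPlus_inr {i : ℕ} {x : Fin p ⊕ Fin q → ℂ} (hx : x ∈ stdPlus p q i)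
    (k : Fin q) : x (Sum.inr k) = 0 :=
  (supp_of_mem_sup (j := 0) (Submodule.mem_sup_left hx)).2 k (Nat.zero_le _)

private lemma stdMinus_inl {j : ℕ} {x : Fin p ⊕ Fin q → ℂ} (hx : x ∈ stdMinus p q j)
    (k : Fin p) : x (Sum.inl k) = 0 :=
  (supp_of_mem_sup (i := 0) (Submodule.mem_sup_right hx)).1 k (Nat.zero_le _)

private lemma stdPlus_sup_stdMinus_top : stdPlus p q p ⊔ stdMinus p q q = ⊤ := by
  rw [eq_top_iff]
  intro x _
  exact mem_sup_of_supp (fun k _ => k.isLt) (fun k _ => k.isLt)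

private lemma sup_inf_sup {U' U T' T : Submodule ℂ (Fin p ⊕ Fin q → ℂ)}
    (h1 : U' ≤ U) (h2 : U ≤ stdPlus p q p) (h3 : T' ≤ T) (h4 : T ≤ stdMinus p q q) :
    (U' ⊔ T) ⊓ (U ⊔ T') = U' ⊔ T' := by
  refine le_antisymm ?_ (le_inf (sup_le_sup le_rfl h3) (sup_le_sup h1 le_rfl))
  intro x hx
  rw [Submodule.mem_inf] at hx
  obtain ⟨h5, h6⟩ := hx
  rw [Submodule.mem_sup] at h5 h6 ⊢
  obtain ⟨y, hy, z, hz, rfl⟩ := h5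
  obtain ⟨y2, hy2, z2, hz2, hx2⟩ := h6
  have hyy : y2 = y := by
    funext s
    have := congrFun hx2 s
    rcases s with k | k
    · simp only [Pi.add_apply, stdMinus_inl (h4 hz) k, stdMinus_inl (h4 (h3 hz2)) k,
        add_zero] at this ⊢
      exact this
    · rw [stdPlus_inr (h2 hy2) k, stdPlus_inr (h2 (h1 hy)) k]
  have hzz : z2 = z := by
    have := hx2
    rw [hyy] at this
    exact add_left_cancel this
  exact ⟨y, hy, z, hzz ▸ hz2, rfl⟩

end Aux

section Cols

variable {p q r : ℕ}

private def colFn (ω : MatT p q r) : Fin r → (Fin p ⊕ Fin q → ℂ) := fun c s => ω s c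

private lemma colSpace_eq (ω : MatT p q r) :
    colSpace ω = Submodule.span ℂ (Set.range (colFn ω)) := by
  rw [colSpace, Matrix.range_mulVecLin]
  rfl

private lemma col_indep {ω : MatT p q r} (hω : InT ω) : LinearIndependent ℂ (colFn ω) := by
  rw [linearIndependent_iff_card_eq_finrank_span]
  have h := hω.1
  rw [Matrix.rank] at h
  rw [Fintype.card_fin, Set.finrank, ← colSpace_eq, colSpace]
  exact h.symm

private lemma top01 {ω : MatT p q r} (hω : InT ω) (k : Fin p) (c : Fin r) :
    ω (Sum.inl k) c = 0 ∨ ω (Sum.inl k) c = 1 := hω.2.1.1 k c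

private lemma bot01 {ω : MatT p q r} (hω : InT ω) (k : Fin q) (c : Fin r) :
    ω (Sum.inr k) c = 0 ∨ ω (Sum.inr k) c = 1 := hω.2.2.1 k c

private lemma toprow {ω : MatT p q r} (hω : InT ω) (k : Fin p) (c c' : Fin r) :
    ω (Sum.inl k) c = 1 → ω (Sum.inl k) c' = 1 → c = c' := hω.2.1.2.1 k c c'

private lemma botrow {ω : MatT p q r} (hω : InT ω) (k : Fin q) (c c' : Fin r) :
    ω (Sum.inr k) c = 1 → ω (Sum.inr k) c' = 1 → c = c' := hω.2.2.2.1 k c c'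

private lemma topcol {ω : MatT p q r} (hω : InT ω) (k k' : Fin p) (c : Fin r) :
    ω (Sum.inl k) c = 1 → ω (Sum.inl k') c = 1 → k = k' := hω.2.1.2.2 k k' c

private lemma botcol {ω : MatT p q r} (hω : InT ω) (k k' : Fin q) (c : Fin r) :
    ω (Sum.inr k) c = 1 → ω (Sum.inr k') c = 1 → k = k' := hω.2.2.2.2 k k' c

private lemma finrank_colSpace_inf {ω : MatT p q r} (hω : InT ω) (i j : ℕ) :
    Module.finrank ℂ ↥(colSpace ω ⊓ (stdPlus p q i ⊔ stdMinus p q j)) = rij ω i j := by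
  classical
  set G : Set (Fin r) := {c | (∀ k : Fin p, ω (Sum.inl k) c ≠ 0 → (k:ℕ) < i) ∧
    (∀ k : Fin q, ω (Sum.inr k) c ≠ 0 → (k:ℕ) < j)} with hG
  have key : colSpace ω ⊓ (stdPlus p q i ⊔ stdMinus p q j) = Submodule.span ℂ (colFn ω '' G) := by
    refine le_antisymm ?_ ?_
    · rintro x hx
      rw [Submodule.mem_inf] at hx
      obtain ⟨hx1, hx2⟩ := hx
      obtain ⟨lam, rfl⟩ := hx1
      have hx' : ∀ s, (ω.mulVecLin lam) s = ∑ c, lam c * ω s c := by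
        intro s
        simp [Matrix.mulVecLin_apply, Matrix.mulVec, dotProduct, mul_comm]
      have hlam : ∀ c, c ∉ G → lam c = 0 := by
        intro c hc
        simp only [hG, Set.mem_setOf_eq, not_and_or] at hc
        rcases hc with hc | hc
        · push_neg at hc
          obtain ⟨k, hk1, hk2⟩ := hc
          have h1 : ω (Sum.inl k) c = 1 := (top01 hω k c).resolve_left hk1
          have h0 : (ω.mulVecLin lam) (Sum.inl k) = 0 :=
            (supp_of_mem_sup hx2).1 k hk2
          rw [hx', Finset.sum_eq_single c] at h0
          · rw [h1, mul_one] at h0; exact h0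
          · intro c' _ hc'
            rcases top01 hω k c' with h | h
            · rw [h, mul_zero]
            · exact absurd (toprow hω k c' c h h1) hc'
          · simp
        · push_neg at hc
          obtain ⟨k, hk1, hk2⟩ := hc
          have h1 : ω (Sum.inr k) c = 1 := (bot01 hω k c).resolve_left hk1
          have h0 : (ω.mulVecLin lam) (Sum.inr k) = 0 :=
            (supp_of_mem_sup hx2).2 k hk2
          rw [hx', Finset.sum_eq_single c] at h0
          · rw [h1, mul_one] at h0; exact h0
          · intro c' _ hc'
            rcases bot01 hω k c' with h | h
            · rw [h, mul_zero]
            · exact absurd (botrow hω k c' c h h1) hc'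
          · simp
      have hx : ω.mulVecLin lam = ∑ c, lam c • colFn ω c := by
        funext s
        rw [hx', Finset.sum_apply]
        exact Finset.sum_congr rfl fun c _ => rfl
      rw [hx]
      refine Submodule.sum_mem _ fun c _ => ?_
      by_cases hc : c ∈ G
      · exact Submodule.smul_mem _ _ (Submodule.subset_span ⟨c, hc, rfl⟩)
      · rw [hlam c hc, zero_smul]; exact Submodule.zero_mem _
    · rw [Submodule.span_le]
      rintro x ⟨c, hc, rfl⟩
      rw [SetLike.mem_coe, Submodule.mem_inf]
      refine ⟨colSpace_eq ω ▸ Submodule.subset_span ⟨c, rfl⟩, mem_sup_of_supp hc.1 hc.2⟩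
  rw [key, Set.image_eq_range]
  have hind : LinearIndependent ℂ (fun c : G => colFn ω c) :=
    (col_indep hω).comp Subtype.val Subtype.val_injective
  rw [finrank_span_eq_card hind, rij]
  rw [Nat.card_eq_fintype_card]
  exact (Fintype.card_congr (Equiv.subtypeEquivRight fun c => Iff.rfl)).symm

end Cols

section Fwd

variable {p q r : ℕ}

private lemma blocks_unit {g₁ : Matrix (Fin p) (Fin p) ℂ} {g₂ : Matrix (Fin q) (Fin q) ℂ}
    (hg₁ : IsUnit g₁) (hg₂ : IsUnit g₂) : IsUnit (Matrix.fromBlocks g₁ 0 0 g₂) := by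
  rw [Matrix.isUnit_iff_isUnit_det _, Matrix.det_fromBlocks_zero₂₁]
  exact ((Matrix.isUnit_iff_isUnit_det _).mp hg₁).mul ((Matrix.isUnit_iff_isUnit_det _).mp hg₂)

private lemma unit_mulVecLin_inj {n : Type*} [Fintype n] [DecidableEq n]
    {g : Matrix n n ℂ} (hg : IsUnit g) : Function.Injective g.mulVecLin := by
  rw [Matrix.coe_mulVecLin]
  exact Matrix.mulVec_injective_iff_isUnit.mpr hg

private lemma finrank_map_unit {g : Matrix (Fin p ⊕ Fin q) (Fin p ⊕ Fin q) ℂ}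
    (hg : IsUnit g) (X : Submodule ℂ (Fin p ⊕ Fin q → ℂ)) :
    Module.finrank ℂ ↥(Submodule.map g.mulVecLin X) = Module.finrank ℂ ↥X := by
  have hinj := unit_mulVecLin_inj hg
  have hsurj : Function.Surjective g.mulVecLin := LinearMap.surjective_of_injective hinj
  exact LinearEquiv.finrank_map_eq (LinearEquiv.ofBijective g.mulVecLin ⟨hinj, hsurj⟩) X

private lemma forward {ω : MatT p q r} (hω : InT ω)
    (W : Submodule ℂ (Fin p ⊕ Fin q → ℂ))
    (Fp Fm : ℕ → Submodule ℂ (Fin p ⊕ Fin q → ℂ))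
    (g₁ : Matrix (Fin p) (Fin p) ℂ) (g₂ : Matrix (Fin q) (Fin q) ℂ)
    (hg₁ : IsUnit g₁) (hg₂ : IsUnit g₂)
    (hWeq : W = Submodule.map (Matrix.fromBlocks g₁ 0 0 g₂).mulVecLin (colSpace ω))
    (hFpeq : ∀ i ≤ p, Fp i = Submodule.map (Matrix.fromBlocks g₁ 0 0 g₂).mulVecLin (stdPlus p q i))
    (hFmeq : ∀ j ≤ q, Fm j = Submodule.map (Matrix.fromBlocks g₁ 0 0 g₂).mulVecLin (stdMinus p q j)) :
    ∀ i ≤ p, ∀ j ≤ q, Module.finrank ℂ ↥(W ⊓ (Fp i ⊔ Fm j)) = rij ω i j := by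
  intro i hi j hj
  have hunit := blocks_unit hg₁ hg₂
  have hinj := unit_mulVecLin_inj hunit
  rw [hWeq, hFpeq i hi, hFmeq j hj, ← Submodule.map_sup, ← Submodule.map_inf _ hinj,
    finrank_map_unit hunit]
  exact finrank_colSpace_inf hω i j

end Fwd

section Levels

variable {p q r : ℕ}

private def la (ω : MatT p q r) (c : Fin r) : ℕ :=
  (Finset.univ.filter fun k : Fin p => ω (Sum.inl k) c ≠ 0).sup fun k => (k : ℕ) + 1

private def lb (ω : MatT p q r) (c : Fin r) : ℕ :=
  (Finset.univ.filter fun k : Fin q => ω (Sum.inr k) c ≠ 0).sup fun k => (k : ℕ) + 1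

private lemma la_le_iff {ω : MatT p q r} {c : Fin r} {i : ℕ} :
    la ω c ≤ i ↔ ∀ k : Fin p, ω (Sum.inl k) c ≠ 0 → (k : ℕ) < i := by
  rw [la, Finset.sup_le_iff]
  constructor
  · intro h k hk; exact h k (Finset.mem_filter.mpr ⟨Finset.mem_univ _, hk⟩)
  · intro h k hk; exact h k (Finset.mem_filter.mp hk).2

private lemma lb_le_iff {ω : MatT p q r} {c : Fin r} {j : ℕ} :
    lb ω c ≤ j ↔ ∀ k : Fin q, ω (Sum.inr k) c ≠ 0 → (k : ℕ) < j := by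
  rw [lb, Finset.sup_le_iff]
  constructor
  · intro h k hk; exact h k (Finset.mem_filter.mpr ⟨Finset.mem_univ _, hk⟩)
  · intro h k hk; exact h k (Finset.mem_filter.mp hk).2

private lemma la_le_p {ω : MatT p q r} (c : Fin r) : la ω c ≤ p :=
  la_le_iff.mpr fun k _ => k.isLt

private lemma lb_le_q {ω : MatT p q r} (c : Fin r) : lb ω c ≤ q :=
  lb_le_iff.mpr fun k _ => k.isLt

private lemma la_exists {ω : MatT p q r} {c : Fin r} (hc : la ω c ≠ 0) :
    ∃ k : Fin p, ω (Sum.inl k) c ≠ 0 ∧ (k : ℕ) + 1 = la ω c := by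
  rcases Finset.eq_empty_or_nonempty
      (Finset.univ.filter fun k : Fin p => ω (Sum.inl k) c ≠ 0) with he | hne
  · rw [la, he, Finset.sup_empty] at hc; exact absurd rfl hc
  · obtain ⟨k, hk, hsup⟩ := Finset.exists_mem_eq_sup _ hne fun k : Fin p => (k : ℕ) + 1
    exact ⟨k, (Finset.mem_filter.mp hk).2, hsup.symm⟩

private lemma lb_exists {ω : MatT p q r} {c : Fin r} (hc : lb ω c ≠ 0) :
    ∃ k : Fin q, ω (Sum.inr k) c ≠ 0 ∧ (k : ℕ) + 1 = lb ω c := by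
  rcases Finset.eq_empty_or_nonempty
      (Finset.univ.filter fun k : Fin q => ω (Sum.inr k) c ≠ 0) with he | hne
  · rw [lb, he, Finset.sup_empty] at hc; exact absurd rfl hc
  · obtain ⟨k, hk, hsup⟩ := Finset.exists_mem_eq_sup _ hne fun k : Fin q => (k : ℕ) + 1
    exact ⟨k, (Finset.mem_filter.mp hk).2, hsup.symm⟩

private lemma la_eq_of_one {ω : MatT p q r} (hω : InT ω) {c : Fin r} {k : Fin p}
    (h : ω (Sum.inl k) c = 1) : la ω c = (k : ℕ) + 1 := by
  refine le_antisymm (la_le_iff.mpr fun k' hk' => ?_) ?_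
  · have h' : ω (Sum.inl k') c = 1 := (top01 hω k' c).resolve_left hk'
    rw [topcol hω k' k c h' h]
    omega
  · exact Finset.le_sup (f := fun k : Fin p => (k : ℕ) + 1)
      (Finset.mem_filter.mpr ⟨Finset.mem_univ _, by rw [h]; exact one_ne_zero⟩)

private lemma lb_eq_of_one {ω : MatT p q r} (hω : InT ω) {c : Fin r} {k : Fin q}
    (h : ω (Sum.inr k) c = 1) : lb ω c = (k : ℕ) + 1 := by
  refine le_antisymm (lb_le_iff.mpr fun k' hk' => ?_) ?_
  · have h' : ω (Sum.inr k') c = 1 := (bot01 hω k' c).resolve_left hk'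
    rw [botcol hω k' k c h' h]
    omega
  · exact Finset.le_sup (f := fun k : Fin q => (k : ℕ) + 1)
      (Finset.mem_filter.mpr ⟨Finset.mem_univ _, by rw [h]; exact one_ne_zero⟩)

private lemma pair_unique {ω : MatT p q r} (hω : InT ω) (c c' : Fin r)
    (h1 : la ω c = la ω c') (h2 : lb ω c = lb ω c') : c = c' := by
  by_cases ha : la ω c = 0
  · by_cases hb : lb ω c = 0
    · exfalso
      apply (col_indep hω).ne_zero c
      funext s
      rcases s with k | k
      · by_contra hne
        have := la_le_iff.mp (le_of_eq ha) k hne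
        omega
      · by_contra hne
        have := lb_le_iff.mp (le_of_eq hb) k hne
        omega
    · obtain ⟨k, hk, hks⟩ := lb_exists hb
      obtain ⟨k', hk', hks'⟩ := lb_exists (c := c') (h2 ▸ hb)
      have hkk : k = k' := by
        have : (k : ℕ) = (k' : ℕ) := by omega
        exact Fin.ext this
      subst hkk
      exact botrow hω k c c' ((bot01 hω k c).resolve_left hk)
        ((bot01 hω k c').resolve_left hk')
  · obtain ⟨k, hk, hks⟩ := la_exists ha
    obtain ⟨k', hk', hks'⟩ := la_exists (c := c') (h1 ▸ ha)
    have hkk : k = k' := by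
      have : (k : ℕ) = (k' : ℕ) := by omega
      exact Fin.ext this
    subst hkk
    exact toprow hω k c c' ((top01 hω k c).resolve_left hk)
      ((top01 hω k c').resolve_left hk')

private def cnt (ω : MatT p q r) (i j : ℕ) : ℕ :=
  (Finset.univ.filter fun c : Fin r => la ω c + 1 ≤ i ∧ lb ω c + 1 ≤ j).card

private lemma cnt_rij (ω : MatT p q r) (i j : ℕ) : cnt ω (i + 1) (j + 1) = rij ω i j := by
  rw [rij, Nat.card_eq_fintype_card, Fintype.card_subtype, cnt]
  congr 1
  apply Finset.filter_congr
  intro c _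
  rw [← la_le_iff (i := i), ← lb_le_iff (j := j)]
  omega

private lemma cnt_zero_left (ω : MatT p q r) (j : ℕ) : cnt ω 0 j = 0 := by
  rw [cnt, Finset.card_eq_zero, Finset.filter_eq_empty_iff]
  intro c _
  omega

private lemma cnt_zero_right (ω : MatT p q r) (i : ℕ) : cnt ω i 0 = 0 := by
  rw [cnt, Finset.card_eq_zero, Finset.filter_eq_empty_iff]
  intro c _
  omega

private lemma cnt_rect (ω : MatT p q r) (i j : ℕ) :
    cnt ω (i + 1) (j + 1) + cnt ω i j =
      cnt ω i (j + 1) + cnt ω (i + 1) j +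
        (Finset.univ.filter fun c : Fin r => la ω c = i ∧ lb ω c = j).card := by
  simp only [cnt, Finset.card_filter]
  rw [← Finset.sum_add_distrib, ← Finset.sum_add_distrib, ← Finset.sum_add_distrib]
  apply Finset.sum_congr rfl
  intro c _
  split_ifs <;> omega

private lemma cnt_mult_le_one {ω : MatT p q r} (hω : InT ω) (i j : ℕ) :
    (Finset.univ.filter fun c : Fin r => la ω c = i ∧ lb ω c = j).card ≤ 1 := by
  rw [Finset.card_le_one]
  intro a ha b hb
  rw [Finset.mem_filter] at ha hb
  exact pair_unique hω a b (ha.2.1.trans hb.2.1.symm) (ha.2.2.trans hb.2.2.symm)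

end Levels

section BackwardW

variable {p q r : ℕ}

private lemma backward_w {ω : MatT p q r} (hω : InT ω)
    (W : Submodule ℂ (Fin p ⊕ Fin q → ℂ))
    (Fp Fm : ℕ → Submodule ℂ (Fin p ⊕ Fin q → ℂ))
    (hFp : IsCompleteFlag p (stdPlus p q p) Fp)
    (hFm : IsCompleteFlag q (stdMinus p q q) Fm)
    (hdim : ∀ i ≤ p, ∀ j ≤ q, Module.finrank ℂ ↥(W ⊓ (Fp i ⊔ Fm j)) = rij ω i j) :
    ∃ w : Fin r → (Fin p ⊕ Fin q → ℂ),
      Submodule.span ℂ (Set.range w) = W ∧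
      (∀ c, w c ∈ W ⊓ (Fp (la ω c) ⊔ Fm (lb ω c))) ∧
      (∀ c, la ω c ≠ 0 → w c ∉ W ⊓ (Fp (la ω c - 1) ⊔ Fm (lb ω c))) ∧
      (∀ c, lb ω c ≠ 0 → w c ∉ W ⊓ (Fp (la ω c) ⊔ Fm (lb ω c - 1))) := by
  classical
  set D : ℕ → ℕ → Submodule ℂ (Fin p ⊕ Fin q → ℂ) := fun i j =>
    if i = 0 ∨ j = 0 then ⊥ else W ⊓ (Fp (i - 1) ⊔ Fm (j - 1)) with hD
  have hDsucc : ∀ i j, D (i + 1) (j + 1) = W ⊓ (Fp i ⊔ Fm j) := by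
    intro i j
    simp only [hD]
    rw [if_neg (by omega)]
    simp
  have hDzero : ∀ i j, i = 0 ∨ j = 0 → D i j = ⊥ := by
    intro i j h
    simp only [hD]
    rw [if_pos h]
  have hFple : ∀ i ≤ p, Fp i ≤ stdPlus p q p :=
    fun i hi => le_trans (hFp.1 i p hi le_rfl) (le_of_eq hFp.2.2)
  have hFmle : ∀ j ≤ q, Fm j ≤ stdMinus p q q :=
    fun j hj => le_trans (hFm.1 j q hj le_rfl) (le_of_eq hFm.2.2)
  have hDle : ∀ i i' j j', i ≤ i' → j ≤ j' → i' ≤ p + 1 → j' ≤ q + 1 → D i j ≤ D i' j' := by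
    intro i i' j j' hii hjj hi' hj'
    by_cases h : i = 0 ∨ j = 0
    · rw [hDzero i j h]; exact bot_le
    · push_neg at h
      simp only [hD]
      rw [if_neg (by omega), if_neg (by omega)]
      exact inf_le_inf le_rfl (sup_le_sup (hFp.1 _ _ (by omega) (by omega))
        (hFm.1 _ _ (by omega) (by omega)))
  have hDinf : ∀ i i' j j', i ≤ i' → j ≤ j' → i' ≤ p + 1 → j' ≤ q + 1 →
      D i j' ⊓ D i' j = D i j := by
    intro i i' j j' hii hjj hi' hj'
    by_cases hi : i = 0
    · rw [hDzero i j' (Or.inl hi), hDzero i j (Or.inl hi)]; exact bot_inf_eq _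
    by_cases hj : j = 0
    · rw [hDzero i' j (Or.inr hj), hDzero i j (Or.inr hj)]; exact inf_bot_eq _
    simp only [hD]
    rw [if_neg (by omega), if_neg (by omega), if_neg (by omega)]
    rw [inf_inf_inf_comm, inf_idem]
    congr 1
    exact sup_inf_sup (hFp.1 _ _ (by omega) (by omega)) (hFple _ (by omega))
      (hFm.1 _ _ (by omega) (by omega)) (hFmle _ (by omega))
  have hDN : ∀ i ≤ p + 1, ∀ j ≤ q + 1, Module.finrank ℂ ↥(D i j) = cnt ω i j := by
    intro i hi j hj
    by_cases h : i = 0 ∨ j = 0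
    · rw [hDzero i j h]
      rcases h with h | h <;> subst h
      · rw [cnt_zero_left]; exact finrank_bot ℂ _
      · rw [cnt_zero_right]; exact finrank_bot ℂ _
    · push_neg at h
      cases i with
      | zero => omega
      | succ i =>
        cases j with
        | zero => omega
        | succ j =>
          rw [hDsucc, cnt_rij]
          exact hdim i (by omega) j (by omega)
  have hwex : ∀ c : Fin r, ∃ y, y ∈ D (la ω c + 1) (lb ω c + 1) ∧
      y ∉ D (la ω c) (lb ω c + 1) ⊔ D (la ω c + 1) (lb ω c) := by
    intro c
    have hi : la ω c ≤ p := la_le_p c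
    have hj : lb ω c ≤ q := lb_le_q c
    by_contra hcon
    push_neg at hcon
    have hle : D (la ω c + 1) (lb ω c + 1) ≤ D (la ω c) (lb ω c + 1) ⊔ D (la ω c + 1) (lb ω c) :=
      fun y hy => hcon y hy
    have hfr := Submodule.finrank_mono hle
    have hsupinf := Submodule.finrank_sup_add_finrank_inf_eq
      (D (la ω c) (lb ω c + 1)) (D (la ω c + 1) (lb ω c))
    rw [hDinf (la ω c) (la ω c + 1) (lb ω c) (lb ω c + 1) (by omega) (by omega)
      (by omega) (by omega)] at hsupinf
    have e1 := hDN (la ω c + 1) (by omega) (lb ω c + 1) (by omega)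
    have e2 := hDN (la ω c) (by omega) (lb ω c + 1) (by omega)
    have e3 := hDN (la ω c + 1) (by omega) (lb ω c) (by omega)
    have e4 := hDN (la ω c) (by omega) (lb ω c) (by omega)
    have hrect := cnt_rect ω (la ω c) (lb ω c)
    have hE : 1 ≤ (Finset.univ.filter fun c' : Fin r =>
        la ω c' = la ω c ∧ lb ω c' = lb ω c).card :=
      Finset.card_pos.mpr ⟨c, Finset.mem_filter.mpr ⟨Finset.mem_univ _, rfl, rfl⟩⟩
    omega
  choose w hw1 hw2 using hwex
  have SPAN : ∀ n, ∀ i ≤ p + 1, ∀ j ≤ q + 1, i + j ≤ n →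
      Submodule.span ℂ (w '' {c | la ω c + 1 ≤ i ∧ lb ω c + 1 ≤ j}) = D i j := by
    intro n
    induction n with
    | zero =>
      intro i hi j hj hn
      have hi0 : i = 0 := by omega
      subst hi0
      have hset : {c : Fin r | la ω c + 1 ≤ 0 ∧ lb ω c + 1 ≤ j} = ∅ := by
        ext c
        simp only [Set.mem_setOf_eq, Set.mem_empty_iff_false, iff_false]
        omega
      rw [hset, Set.image_empty, Submodule.span_empty, hDzero 0 j (Or.inl rfl)]
    | succ n ih =>
      intro i hi j hj hn
      match i, j with
      | 0, j =>
        have hset : {c : Fin r | la ω c + 1 ≤ 0 ∧ lb ω c + 1 ≤ j} = ∅ := by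
          ext c
          simp only [Set.mem_setOf_eq, Set.mem_empty_iff_false, iff_false]
          omega
        rw [hset, Set.image_empty, Submodule.span_empty, hDzero 0 j (Or.inl rfl)]
      | i + 1, 0 =>
        have hset : {c : Fin r | la ω c + 1 ≤ i + 1 ∧ lb ω c + 1 ≤ 0} = ∅ := by
          ext c
          simp only [Set.mem_setOf_eq, Set.mem_empty_iff_false, iff_false]
          omega
        rw [hset, Set.image_empty, Submodule.span_empty, hDzero (i + 1) 0 (Or.inr rfl)]
      | i + 1, j + 1 =>
        have hsplit : {c : Fin r | la ω c + 1 ≤ i + 1 ∧ lb ω c + 1 ≤ j + 1} =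
            ({c | la ω c + 1 ≤ i ∧ lb ω c + 1 ≤ j + 1} ∪
              {c | la ω c + 1 ≤ i + 1 ∧ lb ω c + 1 ≤ j}) ∪
            {c | la ω c = i ∧ lb ω c = j} := by
          ext c
          simp only [Set.mem_setOf_eq, Set.mem_union]
          omega
        rw [hsplit, Set.image_union, Set.image_union, Submodule.span_union,
          Submodule.span_union, ih i (by omega) (j + 1) (by omega) (by omega),
          ih (i + 1) (by omega) j (by omega) (by omega)]
        have hsupinf := Submodule.finrank_sup_add_finrank_inf_eq (D i (j + 1)) (D (i + 1) j)
        rw [hDinf i (i + 1) j (j + 1) (by omega) (by omega) (by omega) (by omega)] at hsupinf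
        have e1 := hDN (i + 1) (by omega) (j + 1) (by omega)
        have e2 := hDN i (by omega) (j + 1) (by omega)
        have e3 := hDN (i + 1) (by omega) j (by omega)
        have e4 := hDN i (by omega) j (by omega)
        have hrect := cnt_rect ω i j
        by_cases hEx : ∃ c₀ : Fin r, la ω c₀ = i ∧ lb ω c₀ = j
        · obtain ⟨c₀, hc1, hc2⟩ := hEx
          have hsing : {c : Fin r | la ω c = i ∧ lb ω c = j} = {c₀} := by
            ext c
            simp only [Set.mem_setOf_eq, Set.mem_singleton_iff]
            constructor
            · intro h; exact pair_unique hω c c₀ (h.1.trans hc1.symm) (h.2.trans hc2.symm)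
            · rintro rfl; exact ⟨hc1, hc2⟩
          rw [hsing, Set.image_singleton]
          have hw1' : w c₀ ∈ D (i + 1) (j + 1) := by
            have := hw1 c₀; rwa [hc1, hc2] at this
          have hw2' : w c₀ ∉ D i (j + 1) ⊔ D (i + 1) j := by
            have := hw2 c₀; rwa [hc1, hc2] at this
          have hEcard : (Finset.univ.filter fun c : Fin r =>
              la ω c = i ∧ lb ω c = j).card = 1 := by
            refine le_antisymm (cnt_mult_le_one hω i j) ?_
            exact Finset.card_pos.mpr ⟨c₀, Finset.mem_filter.mpr ⟨Finset.mem_univ _, hc1, hc2⟩⟩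
          refine Submodule.eq_of_le_of_finrank_le ?_ ?_
          · refine sup_le (sup_le (hDle i (i + 1) (j + 1) (j + 1) (by omega) (by omega)
              (by omega) (by omega)) (hDle (i + 1) (i + 1) j (j + 1) (by omega) (by omega)
              (by omega) (by omega))) ((Submodule.span_singleton_le_iff_mem _ _).mpr hw1')
          · have hlt : D i (j + 1) ⊔ D (i + 1) j <
                (D i (j + 1) ⊔ D (i + 1) j) ⊔ Submodule.span ℂ {w c₀} := by
              refine lt_of_le_of_ne le_sup_left fun heq => hw2' ?_
              rw [heq]
              exact (le_sup_right : Submodule.span ℂ {w c₀} ≤ _) (Submodule.mem_span_singleton_self _)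
            have hfr := Submodule.finrank_lt_finrank_of_lt hlt
            omega
        · have hempty : {c : Fin r | la ω c = i ∧ lb ω c = j} = ∅ := by
            ext c
            simp only [Set.mem_setOf_eq, Set.mem_empty_iff_false, iff_false]
            intro h; exact hEx ⟨c, h⟩
          rw [hempty, Set.image_empty, Submodule.span_empty, sup_bot_eq]
          have hEcard : (Finset.univ.filter fun c : Fin r =>
              la ω c = i ∧ lb ω c = j).card = 0 := by
            rw [Finset.card_eq_zero]
            exact Finset.filter_eq_empty_iff.mpr fun c _ h => hEx ⟨c, h⟩
          refine Submodule.eq_of_le_of_finrank_le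
            (sup_le (hDle i (i + 1) (j + 1) (j + 1) (by omega) (by omega) (by omega) (by omega))
              (hDle (i + 1) (i + 1) j (j + 1) (by omega) (by omega) (by omega) (by omega))) ?_
          omega
  have hsetU : {c : Fin r | la ω c + 1 ≤ p + 1 ∧ lb ω c + 1 ≤ q + 1} = Set.univ := by
    ext c
    simp only [Set.mem_setOf_eq, Set.mem_univ, iff_true]
    exact ⟨by have := la_le_p (ω := ω) c; omega, by have := lb_le_q (ω := ω) c; omega⟩
  have hspanW : Submodule.span ℂ (Set.range w) = W := by
    have h := SPAN (p + 1 + (q + 1)) (p + 1) le_rfl (q + 1) le_rfl le_rfl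
    rw [hsetU, Set.image_univ] at h
    rw [h, hDsucc, hFp.2.2, hFm.2.2, stdPlus_sup_stdMinus_top, inf_top_eq]
  refine ⟨w, hspanW, ?_, ?_, ?_⟩
  · intro c
    have := hw1 c
    rwa [hDsucc] at this
  · intro c hc hmem
    apply hw2 c
    apply Submodule.mem_sup_left
    have heq : D (la ω c) (lb ω c + 1) = W ⊓ (Fp (la ω c - 1) ⊔ Fm (lb ω c)) := by
      simp only [hD]
      rw [if_neg (by omega)]
      simp
    rw [heq]
    exact hmem
  · intro c hc hmem
    apply hw2 c
    apply Submodule.mem_sup_right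
    have heq : D (la ω c + 1) (lb ω c) = W ⊓ (Fp (la ω c) ⊔ Fm (lb ω c - 1)) := by
      simp only [hD]
      rw [if_neg (by omega)]
      simp
    rw [heq]
    exact hmem

end BackwardW

section Backward

variable {p q r : ℕ}

private def topPart (y : Fin p ⊕ Fin q → ℂ) : Fin p ⊕ Fin q → ℂ :=
  Sum.elim (fun k => y (Sum.inl k)) fun _ => 0

private def botPart (y : Fin p ⊕ Fin q → ℂ) : Fin p ⊕ Fin q → ℂ :=
  Sum.elim (fun _ => 0) fun k => y (Sum.inr k)

private lemma top_add_bot (y : Fin p ⊕ Fin q → ℂ) : topPart y + botPart y = y := by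
  funext s
  rcases s with k | k <;> simp [topPart, botPart]

private lemma backward {ω : MatT p q r} (hω : InT ω)
    (W : Submodule ℂ (Fin p ⊕ Fin q → ℂ))
    (Fp Fm : ℕ → Submodule ℂ (Fin p ⊕ Fin q → ℂ))
    (hFp : IsCompleteFlag p (stdPlus p q p) Fp)
    (hFm : IsCompleteFlag q (stdMinus p q q) Fm)
    (hdim : ∀ i ≤ p, ∀ j ≤ q, Module.finrank ℂ ↥(W ⊓ (Fp i ⊔ Fm j)) = rij ω i j) :
    ∃ (g₁ : Matrix (Fin p) (Fin p) ℂ) (g₂ : Matrix (Fin q) (Fin q) ℂ),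
      IsUnit g₁ ∧ IsUnit g₂ ∧
      W = Submodule.map (Matrix.fromBlocks g₁ 0 0 g₂).mulVecLin (colSpace ω) ∧
      (∀ i ≤ p, Fp i =
        Submodule.map (Matrix.fromBlocks g₁ 0 0 g₂).mulVecLin (stdPlus p q i)) ∧
      (∀ j ≤ q, Fm j =
        Submodule.map (Matrix.fromBlocks g₁ 0 0 g₂).mulVecLin (stdMinus p q j)) := by
  classical
  obtain ⟨w, hspanW, hw1, hw2, hw3⟩ := backward_w hω W Fp Fm hFp hFm hdim
  have hFple : ∀ i ≤ p, Fp i ≤ stdPlus p q p :=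
    fun i hi => le_trans (hFp.1 i p hi le_rfl) (le_of_eq hFp.2.2)
  have hFmle : ∀ j ≤ q, Fm j ≤ stdMinus p q q :=
    fun j hj => le_trans (hFm.1 j q hj le_rfl) (le_of_eq hFm.2.2)
  have hFp0 : Fp 0 = ⊥ := Submodule.finrank_eq_zero.mp (hFp.2.1 0 (Nat.zero_le _))
  have hFm0 : Fm 0 = ⊥ := Submodule.finrank_eq_zero.mp (hFm.2.1 0 (Nat.zero_le _))
  have hwW : ∀ c, w c ∈ W := fun c => (Submodule.mem_inf.mp (hw1 c)).1
  have hpart : ∀ c, topPart (w c) ∈ Fp (la ω c) ∧ botPart (w c) ∈ Fm (lb ω c) := by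
    intro c
    obtain ⟨u, hu, v, hv, huv⟩ := Submodule.mem_sup.mp ((Submodule.mem_inf.mp (hw1 c)).2)
    have hla := la_le_p (ω := ω) c
    have hlb := lb_le_q (ω := ω) c
    have hu' : topPart (w c) = u := by
      funext s
      rcases s with k | k
      · have hv0 : v (Sum.inl k) = 0 := stdMinus_inl (hFmle _ hlb hv) k
        have h := congrFun huv (Sum.inl k)
        simp only [Pi.add_apply, hv0, add_zero] at h
        simpa [topPart] using h.symm
      · have h := stdPlus_inr (hFple _ hla hu) k
        simp [topPart, h]
    have hv' : botPart (w c) = v := by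
      funext s
      rcases s with k | k
      · have h := stdMinus_inl (hFmle _ hlb hv) k
        simp [botPart, h]
      · have hu0 : u (Sum.inr k) = 0 := stdPlus_inr (hFple _ hla hu) k
        have h := congrFun huv (Sum.inr k)
        simp only [Pi.add_apply, hu0, zero_add] at h
        simpa [botPart] using h.symm
    rw [hu', hv']
    exact ⟨hu, hv⟩
  have hnot_top : ∀ (c : Fin r) (l : Fin p), la ω c = (l : ℕ) + 1 →
      topPart (w c) ∉ Fp (l : ℕ) := by
    intro c l hl hmem
    apply hw2 c (by omega)
    refine Submodule.mem_inf.mpr ⟨hwW c, ?_⟩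
    have h := (top_add_bot (w c)).symm
    rw [h]
    refine Submodule.add_mem_sup ?_ (hpart c).2
    rw [hl]
    simpa using hmem
  have hnot_bot : ∀ (c : Fin r) (l : Fin q), lb ω c = (l : ℕ) + 1 →
      botPart (w c) ∉ Fm (l : ℕ) := by
    intro c l hl hmem
    apply hw3 c (by omega)
    refine Submodule.mem_inf.mpr ⟨hwW c, ?_⟩
    have h := (top_add_bot (w c)).symm
    rw [h]
    refine Submodule.add_mem_sup (hpart c).1 ?_
    rw [hl]
    simpa using hmem
  -- adapted vectors for the flags
  have hfpbex : ∀ l : Fin p, ∃ v, v ∈ Fp ((l : ℕ) + 1) ∧ v ∉ Fp (l : ℕ) := by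
    intro l
    have hlt : ¬(Fp ((l : ℕ) + 1) ≤ Fp (l : ℕ)) := by
      intro hle
      have h := Submodule.finrank_mono hle
      rw [hFp.2.1 ((l : ℕ) + 1) l.isLt, hFp.2.1 (l : ℕ) (by omega)] at h
      omega
    obtain ⟨v, hv1, hv2⟩ := SetLike.not_le_iff_exists.mp hlt
    exact ⟨v, hv1, hv2⟩
  choose fpb hfpb1 hfpb2 using hfpbex
  have hfmbex : ∀ l : Fin q, ∃ v, v ∈ Fm ((l : ℕ) + 1) ∧ v ∉ Fm (l : ℕ) := by
    intro l
    have hlt : ¬(Fm ((l : ℕ) + 1) ≤ Fm (l : ℕ)) := by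
      intro hle
      have h := Submodule.finrank_mono hle
      rw [hFm.2.1 ((l : ℕ) + 1) l.isLt, hFm.2.1 (l : ℕ) (by omega)] at h
      omega
    obtain ⟨v, hv1, hv2⟩ := SetLike.not_le_iff_exists.mp hlt
    exact ⟨v, hv1, hv2⟩
  choose fmb hfmb1 hfmb2 using hfmbex
  -- the adapted families
  set xp : Fin p → (Fin p ⊕ Fin q → ℂ) := fun l =>
    if h : ∃ c, ω (Sum.inl l) c = 1 then topPart (w h.choose) else fpb l with hxp
  set xm : Fin q → (Fin p ⊕ Fin q → ℂ) := fun l =>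
    if h : ∃ c, ω (Sum.inr l) c = 1 then botPart (w h.choose) else fmb l with hxm
  have hxp_col : ∀ (c : Fin r) (l : Fin p), ω (Sum.inl l) c = 1 → xp l = topPart (w c) := by
    intro c l hc
    have hex : ∃ c', ω (Sum.inl l) c' = 1 := ⟨c, hc⟩
    simp only [hxp]
    rw [dif_pos hex]
    exact congrArg (fun z => topPart (w z)) (toprow hω l hex.choose c hex.choose_spec hc)
  have hxm_col : ∀ (c : Fin r) (l : Fin q), ω (Sum.inr l) c = 1 → xm l = botPart (w c) := by
    intro c l hc
    have hex : ∃ c', ω (Sum.inr l) c' = 1 := ⟨c, hc⟩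
    simp only [hxm]
    rw [dif_pos hex]
    exact congrArg (fun z => botPart (w z)) (botrow hω l hex.choose c hex.choose_spec hc)
  have hxp1 : ∀ l : Fin p, xp l ∈ Fp ((l : ℕ) + 1) := by
    intro l
    simp only [hxp]
    split_ifs with h
    · have hla := la_eq_of_one hω h.choose_spec
      have hh := (hpart h.choose).1
      rwa [hla] at hh
    · exact hfpb1 l
  have hxm1 : ∀ l : Fin q, xm l ∈ Fm ((l : ℕ) + 1) := by
    intro l
    simp only [hxm]
    split_ifs with h
    · have hlb := lb_eq_of_one hω h.choose_spec
      have hh := (hpart h.choose).2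
      rwa [hlb] at hh
    · exact hfmb1 l
  have hxp2 : ∀ l : Fin p, xp l ∉ Fp (l : ℕ) := by
    intro l
    simp only [hxp]
    split_ifs with h
    · exact hnot_top h.choose l (la_eq_of_one hω h.choose_spec)
    · exact hfpb2 l
  have hxm2 : ∀ l : Fin q, xm l ∉ Fm (l : ℕ) := by
    intro l
    simp only [hxm]
    split_ifs with h
    · exact hnot_bot h.choose l (lb_eq_of_one hω h.choose_spec)
    · exact hfmb2 l
  have hxp3 : ∀ (l : Fin p) (k : Fin q), xp l (Sum.inr k) = 0 := by
    intro l k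
    simp only [hxp]
    split_ifs with h
    · rfl
    · exact stdPlus_inr (hFple _ l.isLt (hfpb1 l)) k
  have hxm3 : ∀ (l : Fin q) (k : Fin p), xm l (Sum.inl k) = 0 := by
    intro l k
    simp only [hxm]
    split_ifs with h
    · rfl
    · exact stdMinus_inl (hFmle _ l.isLt (hfmb1 l)) k
  -- span of adapted families
  have SP : ∀ i ≤ p, Submodule.span ℂ (xp '' {l : Fin p | (l : ℕ) < i}) = Fp i := by
    intro i
    induction i with
    | zero =>
      intro _
      have hset : {l : Fin p | (l : ℕ) < 0} = ∅ := by ext l; simp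
      rw [hset, Set.image_empty, Submodule.span_empty, hFp0]
    | succ i ih =>
      intro hi
      have hip : i ≤ p := by omega
      have hipf : i < p := by omega
      set li : Fin p := ⟨i, hipf⟩ with hli
      have hset : {l : Fin p | (l : ℕ) < i + 1} = {l : Fin p | (l : ℕ) < i} ∪ {li} := by
        ext l
        simp only [Set.mem_setOf_eq, Set.mem_union, Set.mem_singleton_iff]
        constructor
        · intro h
          by_cases h' : (l : ℕ) < i
          · exact Or.inl h'
          · exact Or.inr (Fin.ext (by simp only [hli]; omega))
        · rintro (h | rfl)
          · omega
          · simp only [hli]; omega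
      rw [hset, Set.image_union, Set.image_singleton, Submodule.span_union, ih hip]
      refine Submodule.eq_of_le_of_finrank_le ?_ ?_
      · refine sup_le (hFp.1 i (i + 1) (by omega) hi)
          ((Submodule.span_singleton_le_iff_mem _ _).mpr ?_)
        have h := hxp1 li
        simpa only [hli] using h
      · have hlt : Fp i < Fp i ⊔ Submodule.span ℂ {xp li} := by
          refine lt_of_le_of_ne le_sup_left fun heq => ?_
          apply hxp2 li
          have h : xp li ∈ Fp i ⊔ Submodule.span ℂ {xp li} :=
            (le_sup_right : Submodule.span ℂ {xp li} ≤ _) (Submodule.mem_span_singleton_self _)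
          rw [← heq] at h
          simpa only [hli] using h
        have h1 := Submodule.finrank_lt_finrank_of_lt hlt
        rw [hFp.2.1 i hip] at h1
        rw [hFp.2.1 (i + 1) hi]
        omega
  have SM : ∀ j ≤ q, Submodule.span ℂ (xm '' {l : Fin q | (l : ℕ) < j}) = Fm j := by
    intro j
    induction j with
    | zero =>
      intro _
      have hset : {l : Fin q | (l : ℕ) < 0} = ∅ := by ext l; simp
      rw [hset, Set.image_empty, Submodule.span_empty, hFm0]
    | succ j ih =>
      intro hj
      have hjq : j ≤ q := by omega
      have hjqf : j < q := by omega
      set lj : Fin q := ⟨j, hjqf⟩ with hlj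
      have hset : {l : Fin q | (l : ℕ) < j + 1} = {l : Fin q | (l : ℕ) < j} ∪ {lj} := by
        ext l
        simp only [Set.mem_setOf_eq, Set.mem_union, Set.mem_singleton_iff]
        constructor
        · intro h
          by_cases h' : (l : ℕ) < j
          · exact Or.inl h'
          · exact Or.inr (Fin.ext (by simp only [hlj]; omega))
        · rintro (h | rfl)
          · omega
          · simp only [hlj]; omega
      rw [hset, Set.image_union, Set.image_singleton, Submodule.span_union, ih hjq]
      refine Submodule.eq_of_le_of_finrank_le ?_ ?_
      · refine sup_le (hFm.1 j (j + 1) (by omega) hj)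
          ((Submodule.span_singleton_le_iff_mem _ _).mpr ?_)
        have h := hxm1 lj
        simpa only [hlj] using h
      · have hlt : Fm j < Fm j ⊔ Submodule.span ℂ {xm lj} := by
          refine lt_of_le_of_ne le_sup_left fun heq => ?_
          apply hxm2 lj
          have h : xm lj ∈ Fm j ⊔ Submodule.span ℂ {xm lj} :=
            (le_sup_right : Submodule.span ℂ {xm lj} ≤ _) (Submodule.mem_span_singleton_self _)
          rw [← heq] at h
          simpa only [hlj] using h
        have h1 := Submodule.finrank_lt_finrank_of_lt hlt
        rw [hFm.2.1 j hjq] at h1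
        rw [hFm.2.1 (j + 1) hj]
        omega
  -- linear independence
  have hxpind : LinearIndependent ℂ xp := by
    rw [linearIndependent_iff_card_eq_finrank_span]
    have hsetall : {l : Fin p | (l : ℕ) < p} = Set.univ := by ext l; simp [l.isLt]
    rw [Fintype.card_fin, Set.finrank, ← Set.image_univ, ← hsetall, SP p le_rfl,
      hFp.2.1 p le_rfl]
  have hxmind : LinearIndependent ℂ xm := by
    rw [linearIndependent_iff_card_eq_finrank_span]
    have hsetall : {l : Fin q | (l : ℕ) < q} = Set.univ := by ext l; simp [l.isLt]
    rw [Fintype.card_fin, Set.finrank, ← Set.image_univ, ← hsetall, SM q le_rfl,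
      hFm.2.1 q le_rfl]
  -- the matrices
  set g₁ : Matrix (Fin p) (Fin p) ℂ := Matrix.of fun k l => xp l (Sum.inl k) with hg₁
  set g₂ : Matrix (Fin q) (Fin q) ℂ := Matrix.of fun k l => xm l (Sum.inr k) with hg₂
  have hg₁inj : Function.Injective g₁.mulVecLin := by
    rw [← LinearMap.ker_eq_bot, LinearMap.ker_eq_bot']
    intro v hv
    have hz : ∑ l, v l • xp l = 0 := by
      funext s
      rcases s with k | k
      · have h := congrFun hv k
        simp only [Matrix.mulVecLin_apply, Matrix.mulVec, dotProduct, hg₁,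
          Matrix.of_apply, Pi.zero_apply] at h
        rw [Finset.sum_apply]
        simp only [Pi.smul_apply, smul_eq_mul, Pi.zero_apply]
        rw [← h]
        exact Finset.sum_congr rfl fun l _ => mul_comm _ _
      · rw [Finset.sum_apply]
        simp [hxp3]
    have hall := Fintype.linearIndependent_iff.mp hxpind v hz
    funext l
    exact hall l
  have hg₂inj : Function.Injective g₂.mulVecLin := by
    rw [← LinearMap.ker_eq_bot, LinearMap.ker_eq_bot']
    intro v hv
    have hz : ∑ l, v l • xm l = 0 := by
      funext s
      rcases s with k | k
      · rw [Finset.sum_apply]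
        simp [hxm3]
      · have h := congrFun hv k
        simp only [Matrix.mulVecLin_apply, Matrix.mulVec, dotProduct, hg₂,
          Matrix.of_apply, Pi.zero_apply] at h
        rw [Finset.sum_apply]
        simp only [Pi.smul_apply, smul_eq_mul, Pi.zero_apply]
        rw [← h]
        exact Finset.sum_congr rfl fun l _ => mul_comm _ _
    have hall := Fintype.linearIndependent_iff.mp hxmind v hz
    funext l
    exact hall l
  have hg₁unit : IsUnit g₁ := by
    rw [← Matrix.mulVec_injective_iff_isUnit, ← Matrix.coe_mulVecLin]
    exact hg₁inj
  have hg₂unit : IsUnit g₂ := by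
    rw [← Matrix.mulVec_injective_iff_isUnit, ← Matrix.coe_mulVecLin]
    exact hg₂inj
  -- action of the block matrix
  set g : Matrix (Fin p ⊕ Fin q) (Fin p ⊕ Fin q) ℂ := Matrix.fromBlocks g₁ 0 0 g₂ with hg
  have hact_l : ∀ (y : Fin p ⊕ Fin q → ℂ) (k : Fin p),
      g.mulVecLin y (Sum.inl k) = ∑ l : Fin p, g₁ k l * y (Sum.inl l) := by
    intro y k
    simp only [Matrix.mulVecLin_apply, Matrix.mulVec, dotProduct, hg]
    rw [Fintype.sum_sum_type]
    simp [Matrix.fromBlocks_apply₁₁, Matrix.fromBlocks_apply₁₂]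
  have hact_r : ∀ (y : Fin p ⊕ Fin q → ℂ) (k : Fin q),
      g.mulVecLin y (Sum.inr k) = ∑ l : Fin q, g₂ k l * y (Sum.inr l) := by
    intro y k
    simp only [Matrix.mulVecLin_apply, Matrix.mulVec, dotProduct, hg]
    rw [Fintype.sum_sum_type]
    simp [Matrix.fromBlocks_apply₂₁, Matrix.fromBlocks_apply₂₂]
  have hsingle_l : ∀ l : Fin p, g.mulVecLin (Pi.single (Sum.inl l) 1) = xp l := by
    intro l
    funext s
    rcases s with k | k
    · rw [hact_l, Finset.sum_eq_single l]
      · rw [Pi.single_eq_same, mul_one]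
        simp [hg₁]
      · intro l' _ hl'
        have h0 : (Pi.single (Sum.inl l) (1 : ℂ) : Fin p ⊕ Fin q → ℂ) (Sum.inl l') = 0 := by
          rw [Pi.single_apply, if_neg (by simpa using hl')]
        rw [h0, mul_zero]
      · simp
    · rw [hact_r]
      have h0 : ∀ l' : Fin q,
          (Pi.single (Sum.inl l) (1 : ℂ) : Fin p ⊕ Fin q → ℂ) (Sum.inr l') = 0 := by
        intro l'
        rw [Pi.single_apply, if_neg (by simp)]
      rw [Finset.sum_eq_zero fun l' _ => by rw [h0 l', mul_zero]]
      exact (hxp3 l k).symm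
  have hsingle_r : ∀ l : Fin q, g.mulVecLin (Pi.single (Sum.inr l) 1) = xm l := by
    intro l
    funext s
    rcases s with k | k
    · rw [hact_l]
      have h0 : ∀ l' : Fin p,
          (Pi.single (Sum.inr l) (1 : ℂ) : Fin p ⊕ Fin q → ℂ) (Sum.inl l') = 0 := by
        intro l'
        rw [Pi.single_apply, if_neg (by simp)]
      rw [Finset.sum_eq_zero fun l' _ => by rw [h0 l', mul_zero]]
      exact (hxm3 l k).symm
    · rw [hact_r, Finset.sum_eq_single l]
      · rw [Pi.single_eq_same, mul_one]
        simp [hg₂]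
      · intro l' _ hl'
        have h0 : (Pi.single (Sum.inr l) (1 : ℂ) : Fin p ⊕ Fin q → ℂ) (Sum.inr l') = 0 := by
          rw [Pi.single_apply, if_neg (by simpa using hl')]
        rw [h0, mul_zero]
      · simp
  -- action on columns
  have hcol : ∀ c, g.mulVecLin (colFn ω c) = w c := by
    intro c
    funext s
    rcases s with k | k
    · rw [hact_l]
      by_cases h : ∃ l : Fin p, ω (Sum.inl l) c = 1
      · obtain ⟨l₀, hl₀⟩ := h
        rw [Finset.sum_eq_single l₀]
        · rw [show colFn ω c (Sum.inl l₀) = 1 from hl₀, mul_one]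
          have hx := hxp_col c l₀ hl₀
          have : g₁ k l₀ = xp l₀ (Sum.inl k) := by simp [hg₁]
          rw [this, hx]
          rfl
        · intro l' _ hl'
          have h0 : ω (Sum.inl l') c = 0 := by
            rcases top01 hω l' c with h0 | h1
            · exact h0
            · exact absurd (topcol hω l' l₀ c h1 hl₀) hl'
          rw [show colFn ω c (Sum.inl l') = 0 from h0, mul_zero]
        · simp
      · have hz : ∀ l : Fin p, ω (Sum.inl l) c = 0 := by
          intro l
          rcases top01 hω l c with h0 | h1
          · exact h0
          · exact absurd ⟨l, h1⟩ h
        have hla0 : la ω c = 0 :=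
          Nat.le_zero.mp (la_le_iff.mpr fun k' hk' => absurd (hz k') hk')
        have htp : topPart (w c) = 0 := by
          have hh := (hpart c).1
          rw [hla0, hFp0, Submodule.mem_bot] at hh
          exact hh
        have hwk : w c (Sum.inl k) = 0 := by
          have hh := congrFun htp (Sum.inl k)
          simpa [topPart] using hh
        rw [hwk]
        exact Finset.sum_eq_zero fun l _ => by
          rw [show colFn ω c (Sum.inl l) = 0 from hz l, mul_zero]
    · rw [hact_r]
      by_cases h : ∃ l : Fin q, ω (Sum.inr l) c = 1
      · obtain ⟨l₀, hl₀⟩ := h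
        rw [Finset.sum_eq_single l₀]
        · rw [show colFn ω c (Sum.inr l₀) = 1 from hl₀, mul_one]
          have hx := hxm_col c l₀ hl₀
          have : g₂ k l₀ = xm l₀ (Sum.inr k) := by simp [hg₂]
          rw [this, hx]
          rfl
        · intro l' _ hl'
          have h0 : ω (Sum.inr l') c = 0 := by
            rcases bot01 hω l' c with h0 | h1
            · exact h0
            · exact absurd (botcol hω l' l₀ c h1 hl₀) hl'
          rw [show colFn ω c (Sum.inr l') = 0 from h0, mul_zero]
        · simp
      · have hz : ∀ l : Fin q, ω (Sum.inr l) c = 0 := by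
          intro l
          rcases bot01 hω l c with h0 | h1
          · exact h0
          · exact absurd ⟨l, h1⟩ h
        have hlb0 : lb ω c = 0 :=
          Nat.le_zero.mp (lb_le_iff.mpr fun k' hk' => absurd (hz k') hk')
        have htp : botPart (w c) = 0 := by
          have hh := (hpart c).2
          rw [hlb0, hFm0, Submodule.mem_bot] at hh
          exact hh
        have hwk : w c (Sum.inr k) = 0 := by
          have hh := congrFun htp (Sum.inr k)
          simpa [botPart] using hh
        rw [hwk]
        exact Finset.sum_eq_zero fun l _ => by
          rw [show colFn ω c (Sum.inr l) = 0 from hz l, mul_zero]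
  -- final map computations
  have hmapcol : Submodule.map g.mulVecLin (colSpace ω) = W := by
    rw [colSpace_eq, Submodule.map_span, ← Set.range_comp,
      show (g.mulVecLin ∘ colFn ω) = w from funext hcol]
    exact hspanW
  have hmapP : ∀ i ≤ p, Submodule.map g.mulVecLin (stdPlus p q i) = Fp i := by
    intro i hi
    rw [stdPlus, Submodule.map_span]
    have himg : g.mulVecLin '' {v | ∃ k : Fin p, (k : ℕ) < i ∧ v = Pi.single (Sum.inl k) 1}
        = xp '' {l : Fin p | (l : ℕ) < i} := by
      ext y
      simp only [Set.mem_image, Set.mem_setOf_eq]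
      constructor
      · rintro ⟨v, ⟨k, hk, rfl⟩, rfl⟩
        exact ⟨k, hk, (hsingle_l k).symm⟩
      · rintro ⟨l, hl, rfl⟩
        exact ⟨Pi.single (Sum.inl l) 1, ⟨l, hl, rfl⟩, hsingle_l l⟩
    rw [himg]
    exact SP i hi
  have hmapM : ∀ j ≤ q, Submodule.map g.mulVecLin (stdMinus p q j) = Fm j := by
    intro j hj
    rw [stdMinus, Submodule.map_span]
    have himg : g.mulVecLin '' {v | ∃ k : Fin q, (k : ℕ) < j ∧ v = Pi.single (Sum.inr k) 1}
        = xm '' {l : Fin q | (l : ℕ) < j} := by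
      ext y
      simp only [Set.mem_image, Set.mem_setOf_eq]
      constructor
      · rintro ⟨v, ⟨k, hk, rfl⟩, rfl⟩
        exact ⟨k, hk, (hsingle_r k).symm⟩
      · rintro ⟨l, hl, rfl⟩
        exact ⟨Pi.single (Sum.inr l) 1, ⟨l, hl, rfl⟩, hsingle_r l⟩
    rw [himg]
    exact SM j hj
  exact ⟨g₁, g₂, hg₁unit, hg₂unit, hmapcol.symm,
    fun i hi => (hmapP i hi).symm, fun j hj => (hmapM j hj).symm⟩

end Backward

/-- a triple `(W, 𝔉⁺, 𝔉⁻)` lies in the `K`-orbit of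
`([ω], 𝔉₀⁺, 𝔉₀⁻)` iff `dim (W ∩ (F_i⁺ + F_j⁻)) = r_{i,j}(ω)` for all `i, j`. -/
theorem orbit_membership_iff_rij (p q r : ℕ) (hr : r ≤ p + q) (ω : MatT p q r)
    (hω : InT ω)
    (W : Submodule ℂ (Fin p ⊕ Fin q → ℂ)) (hW : Module.finrank ℂ ↥W = r)
    (Fp Fm : ℕ → Submodule ℂ (Fin p ⊕ Fin q → ℂ))
    (hFp : IsCompleteFlag p (stdPlus p q p) Fp)
    (hFm : IsCompleteFlag q (stdMinus p q q) Fm) :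
    (∃ (g₁ : Matrix (Fin p) (Fin p) ℂ) (g₂ : Matrix (Fin q) (Fin q) ℂ),
        IsUnit g₁ ∧ IsUnit g₂ ∧
        W = Submodule.map (Matrix.fromBlocks g₁ 0 0 g₂).mulVecLin (colSpace ω) ∧
        (∀ i ≤ p, Fp i =
          Submodule.map (Matrix.fromBlocks g₁ 0 0 g₂).mulVecLin (stdPlus p q i)) ∧
        (∀ j ≤ q, Fm j =
          Submodule.map (Matrix.fromBlocks g₁ 0 0 g₂).mulVecLin (stdMinus p q j))) ↔
    (∀ i ≤ p, ∀ j ≤ q, Module.finrank ℂ ↥(W ⊓ (Fp i ⊔ Fm j)) = rij ω i j) := by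
  constructor
  · rintro ⟨g₁, g₂, hg₁, hg₂, hWeq, hFpeq, hFmeq⟩
    exact forward hω W Fp Fm g₁ g₂ hg₁ hg₂ hWeq hFpeq hFmeq
  · intro hdim
    exact backward hω W Fp Fm hFp hFm hdim
end
end

section
/- Let ω ∈ 𝕋. The complex dimension of the linear space {(u, v) : u an upper triangular p×p complex matrix, v an upper triangular q×q complex matrix, and the block-diagonal matrix diag(u,v) maps [ω] into [ω]} equals p(p+1)/2 + q(q+1)/2 − ( a⁺(ω) + a⁻(ω) + b(ω)(b(ω)+1)/2 + c(ω) ). -/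
open scoped Classical
open Matrix

noncomputable section

/-- `i ∈ I`: some column of `ω` has a `1` in row `i` (top block) and a `1` in some
bottom row. -/
def memI {p q r : ℕ} (ω : MatT p q r) (i : Fin p) : Prop :=
  ∃ c, ω (Sum.inl i) c = 1 ∧ ∃ j : Fin q, ω (Sum.inr j) c = 1

/-- `i ∈ L`: some column of `ω` has a `1` in row `i` (top block) and no other
nonzero entry. -/
def memL {p q r : ℕ} (ω : MatT p q r) (i : Fin p) : Prop :=
  ∃ c, ω (Sum.inl i) c = 1 ∧ ∀ k, k ≠ Sum.inl i → ω k c = 0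

/-- `i ∈ L'`: row `i` of the top block is zero. -/
def memL' {p q r : ℕ} (ω : MatT p q r) (i : Fin p) : Prop :=
  ∀ c, ω (Sum.inl i) c = 0

/-- `j ∈ J`: some column of `ω` has a `1` in row `p+j` and a `1` in some top row. -/
def memJ {p q r : ℕ} (ω : MatT p q r) (j : Fin q) : Prop :=
  ∃ c, ω (Sum.inr j) c = 1 ∧ ∃ i : Fin p, ω (Sum.inl i) c = 1

/-- `j ∈ M`: some column of `ω` has a `1` in row `p+j` and no other nonzero entry. -/
def memM {p q r : ℕ} (ω : MatT p q r) (j : Fin q) : Prop :=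
  ∃ c, ω (Sum.inr j) c = 1 ∧ ∀ k, k ≠ Sum.inr j → ω k c = 0

/-- `j ∈ M'`: row `p+j` of `ω` (i.e. row `j` of the bottom block) is zero. -/
def memM' {p q r : ℕ} (ω : MatT p q r) (j : Fin q) : Prop :=
  ∀ c, ω (Sum.inr j) c = 0

/-- The degree of a positive vertex: `0` if free (`L'`), `1` if endpoint of an edge
(`I`), `2` if marked (`L`). -/
def degPlus {p q r : ℕ} (ω : MatT p q r) (i : Fin p) : ℕ :=
  if memL' ω i then 0 else if memI ω i then 1 else 2

/-- The degree of a negative vertex. -/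
def degMinus {p q r : ℕ} (ω : MatT p q r) (j : Fin q) : ℕ :=
  if memM' ω j then 0 else if memJ ω j then 1 else 2

/-- `a⁺(ω)`. -/
def aPlus {p q r : ℕ} (ω : MatT p q r) : ℕ :=
  Nat.card {x : Fin p × Fin p // x.1 < x.2 ∧ degPlus ω x.1 < degPlus ω x.2}

/-- `a⁻(ω)`. -/
def aMinus {p q r : ℕ} (ω : MatT p q r) : ℕ :=
  Nat.card {x : Fin q × Fin q // x.1 < x.2 ∧ degMinus ω x.1 < degMinus ω x.2}

/-- `b(ω) = |I|`. -/
def bNum {p q r : ℕ} (ω : MatT p q r) : ℕ :=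
  Nat.card {i : Fin p // memI ω i}

/-- `c(ω)`: the number of inversions (crossings) of `σ`. -/
def cNum {p q r : ℕ} (ω : MatT p q r) (σ : Fin q → Fin p) : ℕ :=
  Nat.card {x : Fin q × Fin q // memJ ω x.1 ∧ memJ ω x.2 ∧ x.1 < x.2 ∧ σ x.2 < σ x.1}

/-!
Every column of `ω` is `0`, `e_i` (`i ∈ L`), `e_{p+j}` (`j ∈ M`) or `e_{σ j} + e_{p+j}` (`j ∈ J`),
so `[ω]` consists of the vectors that vanish on `L' ∪ M'` and whose coordinates `σ j` and `p + j`
agree for `j ∈ J`. Testing `diag(u, v)` on the columns shows that it preserves `[ω]` exactly when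
`u a b = 0` for `deg⁺ a < deg⁺ b`, `v a b = 0` for `deg⁻ a < deg⁻ b`, and `u (σ j) (σ j') = v j j'`
on `J × J`. For triangular `u` and `v` this leaves free exactly the upper-triangular positions with
`deg b ≤ deg a`, except that the entries of `u` on `I × I` are copies of entries of `v`, and that
`v j j'` vanishes at the `c(ω)` crossings of `σ`. The remaining upper-triangular positions number
`a⁺ + b(b+1)/2` and `a⁻ + c`.
-/

theorem eq_single_of_eq_zero_or_one {ι R : Type*} [DecidableEq ι] [Zero R] [One R] {x : ι → R}
    (h01 : ∀ i, x i = 0 ∨ x i = 1) (huniq : ∀ i i', x i = 1 → x i' = 1 → i = i') {i₀ : ι}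
    (hi₀ : x i₀ = 1) : x = Pi.single i₀ 1 := by
  funext i
  rcases eq_or_ne i i₀ with rfl | hi
  · simp [hi₀]
  · rw [Pi.single_eq_of_ne hi]
    exact (h01 i).resolve_right fun h => hi (huniq _ _ h hi₀)

theorem mem_range_mulVecLin_iff {κ ι R : Type*} [Fintype ι] [CommSemiring R] {A : Matrix κ ι R}
    (h01 : ∀ k c, A k c = 0 ∨ A k c = 1) (hrow : ∀ k c c', A k c = 1 → A k c' = 1 → c = c')
    {w : κ → R} :
    w ∈ LinearMap.range A.mulVecLin ↔
      (∀ k, (∀ c, A k c = 0) → w k = 0) ∧ ∀ k k' c, A k c = 1 → A k' c = 1 → w k = w k' := by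
  have mulVec_apply (x : ι → R) (k c) (h : A k c = 1) : (A *ᵥ x) k = x c := by
    simp [mulVec, eq_single_of_eq_zero_or_one (h01 k) (hrow k) h]
  constructor
  · rintro ⟨x, rfl⟩
    refine ⟨fun k hk => ?_, fun k k' c hk hk' => ?_⟩
    · simp [mulVec, dotProduct, hk]
    · simp only [Matrix.mulVecLin_apply, mulVec_apply x k c hk, mulVec_apply x k' c hk']
  · rintro ⟨hzero, hconst⟩
    refine ⟨fun c => if h : ∃ k, A k c = 1 then w h.choose else 0, funext fun k => ?_⟩
    by_cases hk : ∀ c, A k c = 0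
    · simp [mulVec, dotProduct, hk, hzero k hk]
    · obtain ⟨c, hc⟩ := not_forall.mp hk
      have hc : A k c = 1 := (h01 k c).resolve_left hc
      have hex : ∃ k, A k c = 1 := ⟨k, hc⟩
      rw [Matrix.mulVecLin_apply, mulVec_apply _ k c hc, dif_pos hex]
      exact hconst _ _ c hex.choose_spec hc

theorem mapsTo_range_mulVecLin_iff {κ ι R : Type*} [Fintype κ] [Fintype ι] [CommSemiring R]
    (A : Matrix κ ι R) (g : Matrix κ κ R) :
    (∀ w ∈ LinearMap.range A.mulVecLin, g *ᵥ w ∈ LinearMap.range A.mulVecLin) ↔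
      ∀ c, g *ᵥ A.col c ∈ LinearMap.range A.mulVecLin := by
  rw [Matrix.range_mulVecLin]
  refine ⟨fun h c => h _ (Submodule.subset_span ⟨c, rfl⟩), fun h => ?_⟩
  have : Submodule.span R (Set.range A.col) ≤
      (Submodule.span R (Set.range A.col)).comap g.mulVecLin :=
    Submodule.span_le.mpr (Set.range_subset_iff.mpr h)
  exact fun w hw => this hw

section Pairs

variable {α R : Type*}

def matrixOfFree [Zero R] (F : α × α → Prop) (f : {x // F x} → R) : Matrix α α R :=
  of fun a b => if h : F (a, b) then f ⟨(a, b), h⟩ else 0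

theorem matrixOfFree_apply_val [Zero R] {F : α × α → Prop} (f : {x // F x} → R)
    (s : {x // F x}) : matrixOfFree F f s.1.1 s.1.2 = f s :=
  dif_pos s.2

theorem matrixOfFree_apply_of_not [Zero R] {F : α × α → Prop} (f : {x // F x} → R) {a b : α}
    (h : ¬F (a, b)) : matrixOfFree F f a b = 0 :=
  dif_neg h

variable [Fintype α] [LinearOrder α]

theorem card_pairs_le : Nat.card {x : α × α // x.1 ≤ x.2} = Nat.card α * (Nat.card α + 1) / 2 := by
  rw [← Nat.card_congr Sym2.sortEquiv, Nat.card_eq_fintype_card, Sym2.card,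
    Nat.choose_two_right, Nat.card_eq_fintype_card, Nat.add_sub_cancel, Nat.mul_comm]

theorem card_pairs_le_subtype (P : α → Prop) :
    Nat.card {x : α × α // P x.1 ∧ P x.2 ∧ x.1 ≤ x.2} =
      Nat.card {a // P a} * (Nat.card {a // P a} + 1) / 2 := by
  rw [← card_pairs_le]
  exact Nat.card_congr
    { toFun x := ⟨(⟨x.1.1, x.2.1⟩, ⟨x.1.2, x.2.2.1⟩), x.2.2.2⟩
      invFun y := ⟨(y.1.1, y.1.2), y.1.1.2, y.1.2.2, y.2⟩
      left_inv _ := rfl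
      right_inv _ := rfl }

def upperFree (d : α → ℕ) (E : α × α → Prop) (x : α × α) : Prop :=
  x.1 ≤ x.2 ∧ d x.2 ≤ d x.1 ∧ ¬E x

theorem card_upperFree_add (d : α → ℕ) (E : α × α → Prop)
    (hE : ∀ x, E x → x.1 ≤ x.2 ∧ d x.1 = d x.2) :
    Nat.card {x // upperFree d E x} +
        (Nat.card {x : α × α // x.1 < x.2 ∧ d x.1 < d x.2} + Nat.card {x // E x}) =
      Nat.card α * (Nat.card α + 1) / 2 := by
  rw [← card_pairs_le]
  simp only [Nat.card_eq_fintype_card, Fintype.card_subtype, Finset.card_filter,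
    ← Finset.sum_add_distrib]
  refine Finset.sum_congr rfl fun x _ => ?_
  have := hE x
  unfold upperFree
  split_ifs <;> grind

end Pairs

section Stabilizer

variable {p q r : ℕ} {ω : MatT p q r} {σ : Fin q → Fin p}
  {u : Matrix (Fin p) (Fin p) ℂ} {v : Matrix (Fin q) (Fin q) ℂ}

theorem InT.eq_zero_or_one (hω : InT ω) (k : Fin p ⊕ Fin q) (c : Fin r) :
    ω k c = 0 ∨ ω k c = 1 := by
  rcases k with i | j
  exacts [hω.2.1.1 i c, hω.2.2.1 j c]

theorem InT.col_eq_of_row (hω : InT ω) {k : Fin p ⊕ Fin q} {c c' : Fin r} (h : ω k c = 1)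
    (h' : ω k c' = 1) : c = c' := by
  rcases k with i | j
  exacts [hω.2.1.2.1 i c c' h h', hω.2.2.2.1 j c c' h h']

theorem InT.inl_eq_of_col (hω : InT ω) {i i' : Fin p} {c : Fin r} (h : ω (.inl i) c = 1)
    (h' : ω (.inl i') c = 1) : i = i' :=
  hω.2.1.2.2 i i' c h h'

theorem InT.inr_eq_of_col (hω : InT ω) {j j' : Fin q} {c : Fin r} (h : ω (.inr j) c = 1)
    (h' : ω (.inr j') c = 1) : j = j' :=
  hω.2.2.2.2 j j' c h h'

theorem InT.exists_inl_eq_one (hω : InT ω) {i : Fin p} (h : ¬memL' ω i) :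
    ∃ c, ω (.inl i) c = 1 :=
  (not_forall.mp h).imp fun c hc => (hω.eq_zero_or_one _ c).resolve_left hc

theorem InT.exists_inr_eq_one (hω : InT ω) {j : Fin q} (h : ¬memM' ω j) :
    ∃ c, ω (.inr j) c = 1 :=
  (not_forall.mp h).imp fun c hc => (hω.eq_zero_or_one _ c).resolve_left hc

theorem InT.mem_colSpace_iff (hω : InT ω) {w : Fin p ⊕ Fin q → ℂ} :
    w ∈ colSpace ω ↔ (∀ k, (∀ c, ω k c = 0) → w k = 0) ∧
      ∀ i j c, ω (.inl i) c = 1 → ω (.inr j) c = 1 → w (.inl i) = w (.inr j) := by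
  rw [colSpace, mem_range_mulVecLin_iff hω.eq_zero_or_one fun k c c' => hω.col_eq_of_row]
  refine and_congr_right fun _ => ⟨fun h i j c => h _ _ c, fun h k k' c hk hk' => ?_⟩
  rcases k with i | j <;> rcases k' with i' | j'
  · rw [hω.inl_eq_of_col hk hk']
  · exact h i j' c hk hk'
  · exact (h i' j c hk' hk).symm
  · rw [hω.inr_eq_of_col hk hk']

theorem InT.fromBlocks_mulVec_col_inl (hω : InT ω) {i : Fin p} {c : Fin r}
    (hi : ω (.inl i) c = 1) (a : Fin p) : (fromBlocks u 0 0 v *ᵥ ω.col c) (.inl a) = u a i := by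
  have : ω.col c ∘ Sum.inl = Pi.single i 1 := eq_single_of_eq_zero_or_one
    (fun i => hω.eq_zero_or_one _ c) (fun _ _ => hω.inl_eq_of_col) hi
  simp [fromBlocks_mulVec, this]

theorem InT.fromBlocks_mulVec_col_inr (hω : InT ω) {j : Fin q} {c : Fin r}
    (hj : ω (.inr j) c = 1) (b : Fin q) : (fromBlocks u 0 0 v *ᵥ ω.col c) (.inr b) = v b j := by
  have : ω.col c ∘ Sum.inr = Pi.single j 1 := eq_single_of_eq_zero_or_one
    (fun j => hω.eq_zero_or_one _ c) (fun _ _ => hω.inr_eq_of_col) hj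
  simp [fromBlocks_mulVec, this]

theorem InT.fromBlocks_mulVec_col_inl_eq_zero (hω : InT ω) {c : Fin r}
    (h : ¬∃ i, ω (.inl i) c = 1) (a : Fin p) : (fromBlocks u 0 0 v *ᵥ ω.col c) (.inl a) = 0 := by
  have : ω.col c ∘ Sum.inl = 0 :=
    funext fun i => (hω.eq_zero_or_one _ c).resolve_right (not_exists.mp h i)
  simp [fromBlocks_mulVec, this]

theorem InT.fromBlocks_mulVec_col_inr_eq_zero (hω : InT ω) {c : Fin r}
    (h : ¬∃ j, ω (.inr j) c = 1) (b : Fin q) : (fromBlocks u 0 0 v *ᵥ ω.col c) (.inr b) = 0 := by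
  have : ω.col c ∘ Sum.inr = 0 :=
    funext fun j => (hω.eq_zero_or_one _ c).resolve_right (not_exists.mp h j)
  simp [fromBlocks_mulVec, this]

theorem degPlus_le_two (i : Fin p) : degPlus ω i ≤ 2 := by
  unfold degPlus; split_ifs <;> omega

theorem degMinus_le_two (j : Fin q) : degMinus ω j ≤ 2 := by
  unfold degMinus; split_ifs <;> omega

theorem degPlus_eq_zero_iff {i : Fin p} : degPlus ω i = 0 ↔ memL' ω i := by
  unfold degPlus; split_ifs <;> simp_all

theorem degMinus_eq_zero_iff {j : Fin q} : degMinus ω j = 0 ↔ memM' ω j := by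
  unfold degMinus; split_ifs <;> simp_all

theorem degPlus_eq_one_iff {i : Fin p} : degPlus ω i = 1 ↔ memI ω i := by
  have : memI ω i → ¬memL' ω i := fun ⟨c, hc, _⟩ h => by simp [h c] at hc
  unfold degPlus; split_ifs <;> simp_all

theorem degMinus_eq_one_iff {j : Fin q} : degMinus ω j = 1 ↔ memJ ω j := by
  have : memJ ω j → ¬memM' ω j := fun ⟨c, hc, _⟩ h => by simp [h c] at hc
  unfold degMinus; split_ifs <;> simp_all

theorem degPlus_ne_zero_of_eq_one {i : Fin p} {c : Fin r} (h : ω (.inl i) c = 1) :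
    degPlus ω i ≠ 0 := fun h0 => by simp [degPlus_eq_zero_iff.mp h0 c] at h

theorem degMinus_ne_zero_of_eq_one {j : Fin q} {c : Fin r} (h : ω (.inr j) c = 1) :
    degMinus ω j ≠ 0 := fun h0 => by simp [degMinus_eq_zero_iff.mp h0 c] at h

theorem InT.degPlus_eq_two_iff (hω : InT ω) {i : Fin p} {c : Fin r} (hi : ω (.inl i) c = 1) :
    degPlus ω i = 2 ↔ ¬∃ j, ω (.inr j) c = 1 := by
  have h0 := degPlus_ne_zero_of_eq_one hi
  have h1 : degPlus ω i = 1 ↔ ∃ j, ω (.inr j) c = 1 := by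
    rw [degPlus_eq_one_iff]
    refine ⟨fun ⟨c', hc', hj⟩ => ?_, fun hj => ⟨c, hi, hj⟩⟩
    rwa [hω.col_eq_of_row hi hc']
  have := degPlus_le_two (ω := ω) i
  rw [← h1]
  omega

theorem InT.degMinus_eq_two_iff (hω : InT ω) {j : Fin q} {c : Fin r} (hj : ω (.inr j) c = 1) :
    degMinus ω j = 2 ↔ ¬∃ i, ω (.inl i) c = 1 := by
  have h0 := degMinus_ne_zero_of_eq_one hj
  have h1 : degMinus ω j = 1 ↔ ∃ i, ω (.inl i) c = 1 := by
    rw [degMinus_eq_one_iff]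
    refine ⟨fun ⟨c', hc', hi⟩ => ?_, fun hi => ⟨c, hj, hi⟩⟩
    rwa [hω.col_eq_of_row hj hc']
  have := degMinus_le_two (ω := ω) j
  rw [← h1]
  omega

theorem degPlus_lt_cases {a b : Fin p} (h : degPlus ω a < degPlus ω b) :
    ¬memL' ω b ∧ (memL' ω a ∨ memI ω a ∧ degPlus ω b = 2) := by
  rw [← degPlus_eq_zero_iff, ← degPlus_eq_zero_iff, ← degPlus_eq_one_iff]
  have := degPlus_le_two (ω := ω) b
  omega

theorem degMinus_lt_cases {a b : Fin q} (h : degMinus ω a < degMinus ω b) :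
    ¬memM' ω b ∧ (memM' ω a ∨ memJ ω a ∧ degMinus ω b = 2) := by
  rw [← degMinus_eq_zero_iff, ← degMinus_eq_zero_iff, ← degMinus_eq_one_iff]
  have := degMinus_le_two (ω := ω) b
  omega

def IsPairing (ω : MatT p q r) (σ : Fin q → Fin p) : Prop :=
  ∀ j, memJ ω j → ∃ c, ω (.inl (σ j)) c = 1 ∧ ω (.inr j) c = 1

theorem IsPairing.apply_eq (hσ : IsPairing ω σ) (hω : InT ω) {i : Fin p} {j : Fin q} {c : Fin r}
    (hi : ω (.inl i) c = 1) (hj : ω (.inr j) c = 1) : σ j = i := by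
  obtain ⟨c', hσi, hj'⟩ := hσ j ⟨c, hj, i, hi⟩
  rw [hω.col_eq_of_row hj hj'] at hi
  exact hω.inl_eq_of_col hσi hi

theorem IsPairing.injOn (hσ : IsPairing ω σ) (hω : InT ω) {j j' : Fin q} (hj : memJ ω j)
    (hj' : memJ ω j') (h : σ j = σ j') : j = j' := by
  obtain ⟨c, hσj, hjc⟩ := hσ j hj
  obtain ⟨c', hσj', hjc'⟩ := hσ j' hj'
  rw [← h] at hσj'
  rw [← hω.col_eq_of_row hσj hσj'] at hjc'
  exact hω.inr_eq_of_col hjc hjc'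

theorem IsPairing.memI_apply (hσ : IsPairing ω σ) {j : Fin q} (hj : memJ ω j) : memI ω (σ j) :=
  let ⟨c, hσc, hc⟩ := hσ j hj
  ⟨c, hσc, j, hc⟩

theorem IsPairing.exists_of_memI (hσ : IsPairing ω σ) (hω : InT ω) {i : Fin p} (hi : memI ω i) :
    ∃ j, memJ ω j ∧ σ j = i :=
  let ⟨c, hic, j, hjc⟩ := hi
  ⟨j, ⟨c, hjc, i, hic⟩, hσ.apply_eq hω hic hjc⟩

structure StabilizerConditions (ω : MatT p q r) (σ : Fin q → Fin p)
    (u : Matrix (Fin p) (Fin p) ℂ) (v : Matrix (Fin q) (Fin q) ℂ) : Prop where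
  degPlus_lt : ∀ a b, degPlus ω a < degPlus ω b → u a b = 0
  degMinus_lt : ∀ a b, degMinus ω a < degMinus ω b → v a b = 0
  sigma_sigma : ∀ j j', memJ ω j → memJ ω j' → u (σ j) (σ j') = v j j'

theorem stabilizerConditions_of_mulVec_col_mem (hω : InT ω) (hσ : IsPairing ω σ)
    (h : ∀ c, fromBlocks u 0 0 v *ᵥ ω.col c ∈ colSpace ω) : StabilizerConditions ω σ u v where
  degPlus_lt a b hab := by
    obtain ⟨hb, ha⟩ := degPlus_lt_cases hab
    obtain ⟨c, hc⟩ := hω.exists_inl_eq_one hb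
    obtain ⟨hzero, hlink⟩ := hω.mem_colSpace_iff.mp (h c)
    rw [← hω.fromBlocks_mulVec_col_inl (u := u) (v := v) hc]
    rcases ha with ha | ⟨⟨c', hc', j, hj⟩, hb⟩
    · exact hzero _ ha
    · rw [hlink a j c' hc' hj,
        hω.fromBlocks_mulVec_col_inr_eq_zero ((hω.degPlus_eq_two_iff hc).mp hb)]
  degMinus_lt a b hab := by
    obtain ⟨hb, ha⟩ := degMinus_lt_cases hab
    obtain ⟨c, hc⟩ := hω.exists_inr_eq_one hb
    obtain ⟨hzero, hlink⟩ := hω.mem_colSpace_iff.mp (h c)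
    rw [← hω.fromBlocks_mulVec_col_inr (u := u) (v := v) hc]
    rcases ha with ha | ⟨⟨c', hc', i, hi⟩, hb⟩
    · exact hzero _ ha
    · rw [← hlink i a c' hi hc',
        hω.fromBlocks_mulVec_col_inl_eq_zero ((hω.degMinus_eq_two_iff hc).mp hb)]
  sigma_sigma j j' hj hj' := by
    obtain ⟨c, hσc, hc⟩ := hσ j' hj'
    obtain ⟨c', hσc', hc'⟩ := hσ j hj
    have := (hω.mem_colSpace_iff.mp (h c)).2 _ _ c' hσc' hc'
    rwa [hω.fromBlocks_mulVec_col_inl hσc, hω.fromBlocks_mulVec_col_inr hc] at this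

theorem StabilizerConditions.mulVec_col_mem (hS : StabilizerConditions ω σ u v) (hω : InT ω)
    (hσ : IsPairing ω σ) (c : Fin r) : fromBlocks u 0 0 v *ᵥ ω.col c ∈ colSpace ω := by
  rw [hω.mem_colSpace_iff]
  refine ⟨?_, fun b j' c' hb hj' => ?_⟩
  · rintro (a | a) ha
    · by_cases ht : ∃ i, ω (.inl i) c = 1
      · obtain ⟨i, hi⟩ := ht
        rw [hω.fromBlocks_mulVec_col_inl hi]
        exact hS.degPlus_lt _ _ <| (degPlus_eq_zero_iff.mpr ha).trans_lt <|
          Nat.pos_of_ne_zero (degPlus_ne_zero_of_eq_one hi)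
      · exact hω.fromBlocks_mulVec_col_inl_eq_zero ht a
    · by_cases hb : ∃ j, ω (.inr j) c = 1
      · obtain ⟨j, hj⟩ := hb
        rw [hω.fromBlocks_mulVec_col_inr hj]
        exact hS.degMinus_lt _ _ <| (degMinus_eq_zero_iff.mpr ha).trans_lt <|
          Nat.pos_of_ne_zero (degMinus_ne_zero_of_eq_one hj)
      · exact hω.fromBlocks_mulVec_col_inr_eq_zero hb a
  have hσb : σ j' = b := hσ.apply_eq hω hb hj'
  have hb1 : degPlus ω b = 1 := degPlus_eq_one_iff.mpr ⟨c', hb, j', hj'⟩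
  have hj'1 : degMinus ω j' = 1 := degMinus_eq_one_iff.mpr ⟨c', hj', b, hb⟩
  by_cases ht : ∃ i, ω (.inl i) c = 1 <;> by_cases hbt : ∃ j, ω (.inr j) c = 1
  · obtain ⟨⟨i, hi⟩, ⟨j, hj⟩⟩ := And.intro ht hbt
    rw [hω.fromBlocks_mulVec_col_inl hi, hω.fromBlocks_mulVec_col_inr hj, ← hσb,
      ← hσ.apply_eq hω hi hj]
    exact hS.sigma_sigma j' j ⟨c', hj', b, hb⟩ ⟨c, hj, i, hi⟩
  · obtain ⟨i, hi⟩ := ht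
    rw [hω.fromBlocks_mulVec_col_inl hi, hω.fromBlocks_mulVec_col_inr_eq_zero hbt]
    exact hS.degPlus_lt _ _ (by rw [hb1, (hω.degPlus_eq_two_iff hi).mpr hbt]; norm_num)
  · obtain ⟨j, hj⟩ := hbt
    rw [hω.fromBlocks_mulVec_col_inl_eq_zero ht, hω.fromBlocks_mulVec_col_inr hj]
    exact (hS.degMinus_lt _ _ (by rw [hj'1, (hω.degMinus_eq_two_iff hj).mpr ht]; norm_num)).symm
  · rw [hω.fromBlocks_mulVec_col_inl_eq_zero ht, hω.fromBlocks_mulVec_col_inr_eq_zero hbt]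

theorem mapsTo_colSpace_iff (hω : InT ω) (hσ : IsPairing ω σ) :
    (∀ w ∈ colSpace ω, fromBlocks u 0 0 v *ᵥ w ∈ colSpace ω) ↔ StabilizerConditions ω σ u v :=
  (mapsTo_range_mulVecLin_iff ω _).trans
    ⟨stabilizerConditions_of_mulVec_col_mem hω hσ, fun hS c => hS.mulVec_col_mem hω hσ c⟩

def borelStabilizer (ω : MatT p q r) :
    Submodule ℂ (Matrix (Fin p) (Fin p) ℂ × Matrix (Fin q) (Fin q) ℂ) where
  carrier := {x | x.1.BlockTriangular id ∧ x.2.BlockTriangular id ∧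
    ∀ w ∈ colSpace ω, fromBlocks x.1 0 0 x.2 *ᵥ w ∈ colSpace ω}
  add_mem' := by
    rintro ⟨u, v⟩ ⟨u', v'⟩ ⟨hu, hv, h⟩ ⟨hu', hv', h'⟩
    refine ⟨hu.add hu', hv.add hv', fun w hw => ?_⟩
    have : fromBlocks (u + u') 0 0 (v + v') = fromBlocks u 0 0 v + fromBlocks u' 0 0 v' := by
      simp [fromBlocks_add]
    rw [Prod.fst_add, Prod.snd_add, this, add_mulVec]
    exact add_mem (h w hw) (h' w hw)
  zero_mem' := ⟨blockTriangular_zero, blockTriangular_zero, fun w _ => by simp⟩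
  smul_mem' := by
    rintro t ⟨u, v⟩ ⟨hu, hv, h⟩
    dsimp only at hu hv h
    refine ⟨fun i j hij => by simp [hu hij], fun i j hij => by simp [hv hij], fun w hw => ?_⟩
    have : fromBlocks (t • u) 0 0 (t • v) = t • fromBlocks u 0 0 v := by simp [fromBlocks_smul]
    rw [Prod.smul_fst, Prod.smul_snd, this, smul_mulVec]
    exact Submodule.smul_mem _ t (h w hw)

theorem mem_borelStabilizer_iff (hω : InT ω) (hσ : IsPairing ω σ)
    {x : Matrix (Fin p) (Fin p) ℂ × Matrix (Fin q) (Fin q) ℂ} :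
    x ∈ borelStabilizer ω ↔
      x.1.BlockTriangular id ∧ x.2.BlockTriangular id ∧ StabilizerConditions ω σ x.1 x.2 :=
  and_congr_right' (and_congr_right' (mapsTo_colSpace_iff hω hσ))

def pairingMatrix (ω : MatT p q r) (σ : Fin q → Fin p) : Matrix (Fin p) (Fin q) ℂ :=
  of fun i j => if memJ ω j ∧ σ j = i then 1 else 0

theorem IsPairing.pairingMatrix_conj_apply (hσ : IsPairing ω σ) (hω : InT ω) {j j' : Fin q}
    (hj : memJ ω j) (hj' : memJ ω j') (V : Matrix (Fin q) (Fin q) ℂ) :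
    (pairingMatrix ω σ * V * (pairingMatrix ω σ)ᵀ) (σ j) (σ j') = V j j' := by
  have row_eq {j} (hj : memJ ω j) : pairingMatrix ω σ (σ j) = Pi.single j 1 := by
    refine eq_single_of_eq_zero_or_one
      (fun k => by simp only [pairingMatrix, of_apply]; split_ifs <;> simp)
      (fun k k' hk hk' => ?_) (by simp [pairingMatrix, hj])
    simp only [pairingMatrix, of_apply, ite_eq_left_iff, zero_ne_one, imp_false,
      not_not] at hk hk'
    exact hσ.injOn hω hk.1 hk'.1 (hk.2.trans hk'.2.symm)
  simp [mul_apply', row_eq hj, row_eq hj']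

theorem IsPairing.pairingMatrix_conj_apply_eq_zero (hσ : IsPairing ω σ) {a b : Fin p}
    (h : ¬(memI ω a ∧ memI ω b)) (V : Matrix (Fin q) (Fin q) ℂ) :
    (pairingMatrix ω σ * V * (pairingMatrix ω σ)ᵀ) a b = 0 := by
  have row_eq {i} (hi : ¬memI ω i) : pairingMatrix ω σ i = 0 := by
    funext j
    simp only [pairingMatrix, of_apply, Pi.zero_apply, ite_eq_right_iff, one_ne_zero, imp_false]
    rintro ⟨hj, rfl⟩
    exact hi (hσ.memI_apply hj)
  rw [not_and_or] at h
  rcases h with h | h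
  · rw [Matrix.mul_assoc, mul_apply', row_eq h, zero_dotProduct]
  · rw [mul_apply']
    simp [row_eq h]

def freePlus (ω : MatT p q r) : Fin p × Fin p → Prop :=
  upperFree (degPlus ω) fun x => memI ω x.1 ∧ memI ω x.2 ∧ x.1 ≤ x.2

def freeMinus (ω : MatT p q r) (σ : Fin q → Fin p) : Fin q × Fin q → Prop :=
  upperFree (degMinus ω) fun x => memJ ω x.1 ∧ memJ ω x.2 ∧ x.1 < x.2 ∧ σ x.2 < σ x.1

theorem StabilizerConditions.apply_eq_zero_of_not_freeMinus (hS : StabilizerConditions ω σ u v)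
    (hu : u.BlockTriangular id) (hv : v.BlockTriangular id) {a b : Fin q}
    (h : ¬freeMinus ω σ (a, b)) : v a b = 0 := by
  rcases lt_or_ge b a with hba | hab
  · exact hv hba
  rcases lt_or_ge (degMinus ω a) (degMinus ω b) with hd | hd
  · exact hS.degMinus_lt a b hd
  obtain ⟨ha, hb, -, hσab⟩ := not_not.mp fun hE => h ⟨hab, hd, hE⟩
  rw [← hS.sigma_sigma a b ha hb]
  exact hu hσab

theorem StabilizerConditions.apply_eq_of_not_freePlus (hS : StabilizerConditions ω σ u v)
    (hu : u.BlockTriangular id) (hω : InT ω) (hσ : IsPairing ω σ) {a b : Fin p}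
    (h : ¬freePlus ω (a, b)) : u a b = (pairingMatrix ω σ * v * (pairingMatrix ω σ)ᵀ) a b := by
  by_cases hI : memI ω a ∧ memI ω b
  · obtain ⟨j, hj, rfl⟩ := hσ.exists_of_memI hω hI.1
    obtain ⟨j', hj', rfl⟩ := hσ.exists_of_memI hω hI.2
    rw [hσ.pairingMatrix_conj_apply hω hj hj', hS.sigma_sigma j j' hj hj']
  · rw [hσ.pairingMatrix_conj_apply_eq_zero hI]
    rcases lt_or_ge b a with hba | hab
    · exact hu hba
    rcases lt_or_ge (degPlus ω a) (degPlus ω b) with hd | hd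
    · exact hS.degPlus_lt a b hd
    exact absurd (not_not.mp fun hE => h ⟨hab, hd, hE⟩) fun hE => hI ⟨hE.1, hE.2.1⟩

theorem matrixOfFree_mem_borelStabilizer (hω : InT ω) (hσ : IsPairing ω σ)
    (f : {x // freePlus ω x} → ℂ) (g : {x // freeMinus ω σ x} → ℂ) :
    (matrixOfFree _ f + pairingMatrix ω σ * matrixOfFree _ g * (pairingMatrix ω σ)ᵀ,
      matrixOfFree _ g) ∈ borelStabilizer ω := by
  rw [mem_borelStabilizer_iff hω hσ]
  dsimp only
  refine ⟨fun a b hab => ?_, fun a b hab => matrixOfFree_apply_of_not g fun h => ?_,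
    ⟨fun a b hab => ?_, fun a b hab => matrixOfFree_apply_of_not g fun h => ?_,
      fun j j' hj hj' => ?_⟩⟩
  · rw [Matrix.add_apply, matrixOfFree_apply_of_not f fun h => not_le.mpr hab h.1, zero_add]
    by_cases hI : memI ω a ∧ memI ω b
    · obtain ⟨j, hj, rfl⟩ := hσ.exists_of_memI hω hI.1
      obtain ⟨j', hj', rfl⟩ := hσ.exists_of_memI hω hI.2
      rw [hσ.pairingMatrix_conj_apply hω hj hj']
      exact matrixOfFree_apply_of_not g fun ⟨hle, _, hE⟩ =>
        hE ⟨hj, hj', lt_of_le_of_ne hle (fun h => hab.ne (congrArg σ h.symm)), hab⟩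
    · exact hσ.pairingMatrix_conj_apply_eq_zero hI _
  · exact not_le.mpr hab h.1
  · rw [Matrix.add_apply, matrixOfFree_apply_of_not f fun h => not_le.mpr hab h.2.1, zero_add]
    refine hσ.pairingMatrix_conj_apply_eq_zero (fun hI => ?_) _
    rw [degPlus_eq_one_iff.mpr hI.1, degPlus_eq_one_iff.mpr hI.2] at hab
    exact lt_irrefl _ hab
  · exact not_le.mpr hab h.2.1
  · have : ¬freePlus ω (σ j, σ j') := fun h => h.2.2 ⟨hσ.memI_apply hj, hσ.memI_apply hj', h.1⟩
    rw [Matrix.add_apply, matrixOfFree_apply_of_not f this, zero_add,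
      hσ.pairingMatrix_conj_apply hω hj hj']

theorem eq_zero_of_mem_borelStabilizer (hω : InT ω) (hσ : IsPairing ω σ)
    (hx : (u, v) ∈ borelStabilizer ω) (hu_free : ∀ s : {x // freePlus ω x}, u s.1.1 s.1.2 = 0)
    (hv_free : ∀ s : {x // freeMinus ω σ x}, v s.1.1 s.1.2 = 0) : (u, v) = 0 := by
  obtain ⟨hu, hv, hS⟩ : u.BlockTriangular id ∧ v.BlockTriangular id ∧
      StabilizerConditions ω σ u v := (mem_borelStabilizer_iff hω hσ).mp hx
  have hv0 : v = 0 := by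
    ext a b
    by_cases h : freeMinus ω σ (a, b)
    · exact hv_free ⟨(a, b), h⟩
    · exact hS.apply_eq_zero_of_not_freeMinus hu hv h
  have hu0 : u = 0 := by
    ext a b
    by_cases h : freePlus ω (a, b)
    · exact hu_free ⟨(a, b), h⟩
    · rw [hS.apply_eq_of_not_freePlus hu hω hσ h, hv0, Matrix.mul_zero, Matrix.zero_mul,
        Matrix.zero_apply]
  rw [hu0, hv0, Prod.mk_zero_zero]

theorem finrank_borelStabilizer (hω : InT ω) (hσ : IsPairing ω σ) :
    Module.finrank ℂ (borelStabilizer ω) =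
      Nat.card {x // freePlus ω x} + Nat.card {x // freeMinus ω σ x} := by
  let res : (Matrix (Fin p) (Fin p) ℂ × Matrix (Fin q) (Fin q) ℂ) →ₗ[ℂ]
      ({x // freePlus ω x} → ℂ) × ({x // freeMinus ω σ x} → ℂ) :=
    { toFun x := (fun s => x.1 s.1.1 s.1.2, fun s => x.2 s.1.1 s.1.2)
      map_add' _ _ := rfl
      map_smul' _ _ := rfl }
  have hinj : Function.Injective (res.domRestrict (borelStabilizer ω)) := by
    refine (injective_iff_map_eq_zero _).mpr fun ⟨⟨u, v⟩, hx⟩ h0 => Subtype.ext ?_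
    exact eq_zero_of_mem_borelStabilizer hω hσ hx (congrFun (congrArg Prod.fst h0))
      (congrFun (congrArg Prod.snd h0))
  have hsurj : Function.Surjective (res.domRestrict (borelStabilizer ω)) := by
    rintro ⟨f, g⟩
    refine ⟨⟨_, matrixOfFree_mem_borelStabilizer hω hσ f g⟩,
      Prod.ext (funext fun s => ?_) (funext fun s => ?_)⟩
    · have hI : ¬(memI ω s.1.1 ∧ memI ω s.1.2) := fun hI => s.2.2.2 ⟨hI.1, hI.2, s.2.1⟩
      show (matrixOfFree _ f + pairingMatrix ω σ * matrixOfFree _ g * (pairingMatrix ω σ)ᵀ)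
        s.1.1 s.1.2 = f s
      rw [Matrix.add_apply, hσ.pairingMatrix_conj_apply_eq_zero hI, add_zero,
        matrixOfFree_apply_val]
    · exact matrixOfFree_apply_val g s
  rw [(LinearEquiv.ofBijective _ ⟨hinj, hsurj⟩).finrank_eq, Module.finrank_prod,
    Module.finrank_fintype_fun_eq_card, Module.finrank_fintype_fun_eq_card,
    Nat.card_eq_fintype_card, Nat.card_eq_fintype_card]

theorem card_freePlus_add (ω : MatT p q r) :
    Nat.card {x // freePlus ω x} + (aPlus ω + bNum ω * (bNum ω + 1) / 2) = p * (p + 1) / 2 := by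
  have := card_upperFree_add (degPlus ω) (fun x => memI ω x.1 ∧ memI ω x.2 ∧ x.1 ≤ x.2)
    fun x hx => ⟨hx.2.2, by rw [degPlus_eq_one_iff.mpr hx.1, degPlus_eq_one_iff.mpr hx.2.1]⟩
  rwa [card_pairs_le_subtype, Nat.card_eq_fintype_card (α := Fin p), Fintype.card_fin] at this

theorem card_freeMinus_add (ω : MatT p q r) (σ : Fin q → Fin p) :
    Nat.card {x // freeMinus ω σ x} + (aMinus ω + cNum ω σ) = q * (q + 1) / 2 := by
  have := card_upperFree_add (degMinus ω)
    (fun x => memJ ω x.1 ∧ memJ ω x.2 ∧ x.1 < x.2 ∧ σ x.2 < σ x.1)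
    fun x hx => ⟨hx.2.2.1.le, by rw [degMinus_eq_one_iff.mpr hx.1, degMinus_eq_one_iff.mpr hx.2.1]⟩
  rwa [Nat.card_eq_fintype_card (α := Fin q), Fintype.card_fin] at this

end Stabilizer

theorem dim_borel_stabilizer_general (p q r : ℕ) (ω : MatT p q r)
    (hω : InT ω) (σ : Fin q → Fin p)
    (hσ : ∀ j, memJ ω j → ∃ c, ω (Sum.inl (σ j)) c = 1 ∧ ω (Sum.inr j) c = 1) :
    ∃ S : Submodule ℂ (Matrix (Fin p) (Fin p) ℂ × Matrix (Fin q) (Fin q) ℂ),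
      (S : Set (Matrix (Fin p) (Fin p) ℂ × Matrix (Fin q) (Fin q) ℂ)) =
        {x | x.1.BlockTriangular id ∧ x.2.BlockTriangular id ∧
          ∀ v ∈ colSpace ω, (Matrix.fromBlocks x.1 0 0 x.2).mulVec v ∈ colSpace ω} ∧
      Module.finrank ℂ ↥S =
        p * (p + 1) / 2 + q * (q + 1) / 2 -
          (aPlus ω + aMinus ω + bNum ω * (bNum ω + 1) / 2 + cNum ω σ) := by
  refine ⟨borelStabilizer ω, rfl, ?_⟩
  have := card_freePlus_add ω
  have := card_freeMinus_add ω σ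
  rw [finrank_borelStabilizer hω hσ]
  omega

/-- the dimension of the stabilizer of `[ω]` in the Borel Lie algebra
`𝔟_K = 𝔟_p⁺ × 𝔟_q⁺`. -/
theorem dim_borel_stabilizer (p q r : ℕ) (hr : r ≤ p + q) (ω : MatT p q r)
    (hω : InT ω) (σ : Fin q → Fin p)
    (hσ : ∀ j, memJ ω j → ∃ c, ω (Sum.inl (σ j)) c = 1 ∧ ω (Sum.inr j) c = 1) :
    ∃ S : Submodule ℂ (Matrix (Fin p) (Fin p) ℂ × Matrix (Fin q) (Fin q) ℂ),
      (S : Set (Matrix (Fin p) (Fin p) ℂ × Matrix (Fin q) (Fin q) ℂ)) =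
        {x | x.1.BlockTriangular id ∧ x.2.BlockTriangular id ∧
          ∀ v ∈ colSpace ω, (Matrix.fromBlocks x.1 0 0 x.2).mulVec v ∈ colSpace ω} ∧
      Module.finrank ℂ ↥S =
        p * (p + 1) / 2 + q * (q + 1) / 2 -
          (aPlus ω + aMinus ω + bNum ω * (bNum ω + 1) / 2 + cNum ω σ) :=
  dim_borel_stabilizer_general p q r ω hω σ hσ
end
end

section
/- Let W and W′ be r-dimensional subspaces of ℂ^{p+q}. There exist g₁ ∈ GL_p(ℂ) and g₂ ∈ GL_q(ℂ) such that the block-diagonal map diag(g₁,g₂) sends W onto W′ if and only if dim(W ∩ V⁺) = dim(W′ ∩ V⁺) and dim(W ∩ V⁻) = dim(W′ ∩ V⁻). -/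
open scoped Classical
open Matrix

noncomputable section

/-!
Identify `ℂ^{p+q}` with `V⁺ × V⁻`, where `V⁺ = ker snd` and `V⁻ = ker fst`. A block-diagonal
automorphism preserves `V⁺` and `V⁻`, so the dimensions of `W ∩ V⁺` and `W ∩ V⁻` are invariants.
Conversely, write `W = A ⊕ B ⊕ C` with `A = W ∩ V⁺` and `B = W ∩ V⁻`. The projection to `V⁺` is
injective on `A ⊕ C` and the projection to `V⁻` on `B ⊕ C`, so bases `α, β, γ` of `A, B, C` give
independent families `α ∪ π⁺γ` in `V⁺` and `β ∪ π⁻γ` in `V⁻`. The sizes of `α, β, γ` depend only on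
the three dimensions, so the same construction for `W'` yields families with the same index sets;
extending the matchings to automorphisms `g₁` of `V⁺` and `g₂` of `V⁻`, the map `diag(g₁, g₂)`
carries a spanning family of `W` onto one of `W'`.
-/

open Module LinearMap Set

namespace Submodule

variable {K V V' : Type*} [DivisionRing K] [AddCommGroup V] [Module K V] [AddCommGroup V']
  [Module K V']

theorem exists_linearIndependent_span_eq [FiniteDimensional K V] {U : Submodule K V} {n : ℕ}
    (hU : finrank K U = n) : ∃ u : Fin n → V, LinearIndependent K u ∧ span K (range u) = U := by
  let b := finBasisOfFinrankEq K U hU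
  refine ⟨U.subtype ∘ b, b.linearIndependent.map' _ U.ker_subtype, ?_⟩
  rw [Set.range_comp, span_image, b.span_eq, map_top, range_subtype]

theorem exists_le_disjoint_sup_eq {U W : Submodule K V} (hUW : U ≤ W) :
    ∃ C ≤ W, Disjoint U C ∧ U ⊔ C = W := by
  obtain ⟨C, hC⟩ := U.exists_isCompl
  refine ⟨C ⊓ W, inf_le_right, hC.disjoint.mono_right inf_le_left, ?_⟩
  rw [← sup_inf_assoc_of_le _ hUW, hC.sup_eq_top, top_inf_eq]

theorem finrank_map_inf_eq (e : V ≃ₗ[K] V') (W : Submodule K V) (X : Submodule K V') :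
    finrank K ↥(W.map (e : V →ₗ[K] V') ⊓ X) = finrank K ↥(W ⊓ X.comap (e : V →ₗ[K] V')) := by
  rw [← e.finrank_map_eq, map_inf _ e.injective, map_comap_eq_of_surjective e.surjective]

end Submodule

theorem LinearIndependent.exists_linearEquiv_apply_eq {K V ι : Type*} [DivisionRing K]
    [AddCommGroup V] [Module K V] [FiniteDimensional K V] {u u' : ι → V}
    (hu : LinearIndependent K u) (hu' : LinearIndependent K u') :
    ∃ f : V ≃ₗ[K] V, ∀ i, f (u i) = u' i := by
  obtain ⟨f, hf⟩ := Submodule.exists_linearEquiv_restrict_eq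
    ((Basis.span hu).equiv (Basis.span hu') (Equiv.refl ι))
  refine ⟨f, fun i => ?_⟩
  have := hf (Basis.span hu i)
  rw [Basis.equiv_apply] at this
  simpa using this.symm

namespace Submodule

variable {K M N : Type*} [DivisionRing K] [AddCommGroup M] [Module K M] [AddCommGroup N]
  [Module K N]

theorem disjoint_inf_ker_snd_inf_ker_fst (W : Submodule K (M × N)) :
    Disjoint (W ⊓ ker (LinearMap.snd K M N)) (W ⊓ ker (LinearMap.fst K M N)) := by
  refine Disjoint.mono inf_le_right inf_le_right ?_
  rw [ker_snd, ker_fst]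
  exact disjoint_inl_inr

theorem comap_prodMap_ker_snd (f₁ : M ≃ₗ[K] M) (f₂ : N ≃ₗ[K] N) :
    (ker (LinearMap.snd K M N)).comap ((f₁ : M →ₗ[K] M).prodMap (f₂ : N →ₗ[K] N)) =
      ker (LinearMap.snd K M N) := by
  ext; simp

theorem comap_prodMap_ker_fst (f₁ : M ≃ₗ[K] M) (f₂ : N ≃ₗ[K] N) :
    (ker (LinearMap.fst K M N)).comap ((f₁ : M →ₗ[K] M).prodMap (f₂ : N →ₗ[K] N)) =
      ker (LinearMap.fst K M N) := by
  ext; simp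

structure IsAdaptedSpanning {ι κ ν : Type*} (W : Submodule K (M × N)) (x : ι → M × N)
    (y : κ → M × N) (z : ν → M × N) : Prop where
  snd_eq_zero : ∀ i, (x i).2 = 0
  fst_eq_zero : ∀ j, (y j).1 = 0
  span_eq : span K (range x ∪ range y ∪ range z) = W
  linearIndependent_fst : LinearIndependent K (Prod.fst ∘ Sum.elim x z)
  linearIndependent_snd : LinearIndependent K (Prod.snd ∘ Sum.elim y z)

variable [FiniteDimensional K M] [FiniteDimensional K N]

theorem finrank_inf_ker_snd_add_finrank_inf_ker_fst_le (W : Submodule K (M × N)) :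
    finrank K ↥(W ⊓ ker (LinearMap.snd K M N)) + finrank K ↥(W ⊓ ker (LinearMap.fst K M N)) ≤
      finrank K W :=
  calc _ = finrank K ↥(W ⊓ ker (LinearMap.snd K M N) ⊔ W ⊓ ker (LinearMap.fst K M N)) := by
        rw [← finrank_sup_add_finrank_inf_eq, (disjoint_inf_ker_snd_inf_ker_fst W).eq_bot,
          finrank_bot, add_zero]
    _ ≤ finrank K W := finrank_mono (sup_le inf_le_left inf_le_left)

theorem IsAdaptedSpanning.exists_map_prodMap_eq {ι κ ν : Type*} {W W' : Submodule K (M × N)}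
    {x x' : ι → M × N} {y y' : κ → M × N} {z z' : ν → M × N}
    (h : W.IsAdaptedSpanning x y z) (h' : W'.IsAdaptedSpanning x' y' z') :
    ∃ (f₁ : M ≃ₗ[K] M) (f₂ : N ≃ₗ[K] N),
      W.map ((f₁ : M →ₗ[K] M).prodMap (f₂ : N →ₗ[K] N)) = W' := by
  obtain ⟨f₁, hf₁⟩ :=
    h.linearIndependent_fst.exists_linearEquiv_apply_eq h'.linearIndependent_fst
  obtain ⟨f₂, hf₂⟩ :=
    h.linearIndependent_snd.exists_linearEquiv_apply_eq h'.linearIndependent_snd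
  set f := (f₁ : M →ₗ[K] M).prodMap (f₂ : N →ₗ[K] N)
  have hx : f ∘ x = x' := funext fun i =>
    Prod.ext (hf₁ (.inl i)) (by simp [f, h.snd_eq_zero, h'.snd_eq_zero])
  have hy : f ∘ y = y' := funext fun j =>
    Prod.ext (by simp [f, h.fst_eq_zero, h'.fst_eq_zero]) (hf₂ (.inl j))
  have hz : f ∘ z = z' := funext fun k => Prod.ext (hf₁ (.inr k)) (hf₂ (.inr k))
  refine ⟨f₁, f₂, ?_⟩
  rw [← h.span_eq, ← h'.span_eq, map_span, image_union, image_union, ← Set.range_comp,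
    ← Set.range_comp, ← Set.range_comp, hx, hy, hz]

theorem exists_isAdaptedSpanning {W : Submodule K (M × N)} {a b c : ℕ}
    (ha : finrank K ↥(W ⊓ ker (LinearMap.snd K M N)) = a)
    (hb : finrank K ↥(W ⊓ ker (LinearMap.fst K M N)) = b) (hc : finrank K W = a + b + c) :
    ∃ (x : Fin a → M × N) (y : Fin b → M × N) (z : Fin c → M × N),
      W.IsAdaptedSpanning x y z := by
  set A := W ⊓ ker (LinearMap.snd K M N)
  set B := W ⊓ ker (LinearMap.fst K M N)
  have hAB : Disjoint A B := disjoint_inf_ker_snd_inf_ker_fst W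
  obtain ⟨C, hCW, hdisj, hsup⟩ := exists_le_disjoint_sup_eq (sup_le inf_le_left inf_le_left :
    A ⊔ B ≤ W)
  have hC : finrank K C = c := by
    have h₁ := finrank_sup_add_finrank_inf_eq (A ⊔ B) C
    have h₂ := finrank_sup_add_finrank_inf_eq A B
    rw [hsup, hdisj.eq_bot, finrank_bot] at h₁
    rw [hAB.eq_bot, finrank_bot] at h₂
    omega
  obtain ⟨x, hx, hxA⟩ := exists_linearIndependent_span_eq ha
  obtain ⟨y, hy, hyB⟩ := exists_linearIndependent_span_eq hb
  obtain ⟨z, hz, hzC⟩ := exists_linearIndependent_span_eq hC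
  -- `A ⊔ C ≤ W` meets `ker fst` only inside `W ⊓ ker fst = B`, which is independent of `A ⊔ C`
  have hAC : Disjoint (A ⊔ C) (ker (LinearMap.fst K M N)) := by
    have := (hAB.symm.disjoint_sup_right_of_disjoint_sup_left (sup_comm A B ▸ hdisj)).symm
    rwa [← inf_eq_left.2 (sup_le inf_le_left hCW), disjoint_assoc]
  have hBC : Disjoint (B ⊔ C) (ker (LinearMap.snd K M N)) := by
    have := (hAB.disjoint_sup_right_of_disjoint_sup_left hdisj).symm
    rwa [← inf_eq_left.2 (sup_le inf_le_left hCW), disjoint_assoc]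
  refine ⟨x, y, z, fun i => ?_, fun j => ?_, ?_, ?_, ?_⟩
  · exact mem_ker.1 (hxA ▸ subset_span (mem_range_self i) : x i ∈ A).2
  · exact mem_ker.1 (hyB ▸ subset_span (mem_range_self j) : y j ∈ B).2
  · rw [span_union, span_union, hxA, hyB, hzC, hsup]
  · refine (hx.sum_type hz (hxA ▸ hzC ▸ hdisj.mono_left le_sup_left)).map
      (f := LinearMap.fst K M N) ?_
    rwa [Sum.elim_range, span_union, hxA, hzC]
  · refine (hy.sum_type hz (hyB ▸ hzC ▸ hdisj.mono_left le_sup_right)).map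
      (f := LinearMap.snd K M N) ?_
    rwa [Sum.elim_range, span_union, hyB, hzC]

theorem exists_map_prodMap_eq_iff {W W' : Submodule K (M × N)}
    (h : finrank K W = finrank K W') :
    (∃ (f₁ : M ≃ₗ[K] M) (f₂ : N ≃ₗ[K] N),
        W.map ((f₁ : M →ₗ[K] M).prodMap (f₂ : N →ₗ[K] N)) = W') ↔
      finrank K ↥(W ⊓ ker (LinearMap.snd K M N)) = finrank K ↥(W' ⊓ ker (LinearMap.snd K M N)) ∧
      finrank K ↥(W ⊓ ker (LinearMap.fst K M N)) = finrank K ↥(W' ⊓ ker (LinearMap.fst K M N)) := by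
  constructor
  · rintro ⟨f₁, f₂, rfl⟩
    rw [← LinearEquiv.coe_prodCongr, finrank_map_inf_eq, finrank_map_inf_eq,
      LinearEquiv.coe_prodCongr, comap_prodMap_ker_snd, comap_prodMap_ker_fst]
    exact ⟨rfl, rfl⟩
  · rintro ⟨ha, hb⟩
    obtain ⟨c, hc⟩ := Nat.exists_eq_add_of_le (finrank_inf_ker_snd_add_finrank_inf_ker_fst_le W)
    obtain ⟨x, y, z, hW⟩ := exists_isAdaptedSpanning rfl rfl hc
    obtain ⟨x', y', z', hW'⟩ := exists_isAdaptedSpanning ha.symm hb.symm (h ▸ hc)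
    exact hW.exists_map_prodMap_eq hW'

end Submodule

theorem Pi.mem_span_single_image_iff {K ι : Type*} [DivisionRing K] [Finite ι] [DecidableEq ι]
    (S : Set ι) (x : ι → K) :
    x ∈ Submodule.span K ((fun i => Pi.single i 1) '' S) ↔ ∀ i ∉ S, x i = 0 := by
  have : (fun i => Pi.single i 1 : ι → ι → K) = Pi.basisFun K ι := by ext; simp
  rw [this, (Pi.basisFun K ι).mem_span_image]
  simp [Set.subset_def, not_imp_comm]

theorem LinearMap.mulVecLin_toMatrix' {R m n : Type*} [CommSemiring R] [Fintype n] [DecidableEq n]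
    (f : (n → R) →ₗ[R] m → R) : (LinearMap.toMatrix' f).mulVecLin = f := by
  rw [← toLin'_apply', toLin'_toMatrix']

theorem sumPiEquivProdPi_comp_fromBlocks_mulVecLin {K m n : Type*} [CommSemiring K] [Fintype m]
    [Fintype n] (g₁ : Matrix m m K) (g₂ : Matrix n n K) :
    (LinearEquiv.sumPiEquivProdPi K m n fun _ => K).toLinearMap ∘ₗ
        (fromBlocks g₁ 0 0 g₂).mulVecLin =
      g₁.mulVecLin.prodMap g₂.mulVecLin ∘ₗ
        (LinearEquiv.sumPiEquivProdPi K m n fun _ => K).toLinearMap := by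
  refine LinearMap.ext fun x => Prod.ext ?_ ?_ <;>
  · simp only [coe_comp, LinearEquiv.coe_coe, Function.comp_apply, mulVecLin_apply,
      fromBlocks_mulVec, prodMap_apply, zero_mulVec, add_zero, zero_add]
    rfl

section Matrix

variable {K m n : Type*} [CommSemiring K] [Fintype m] [Fintype n] [DecidableEq m] [DecidableEq n]

theorem Matrix.isUnit_iff_exists_mulVecLin_eq {g : Matrix n n K} :
    IsUnit g ↔ ∃ f : (n → K) ≃ₗ[K] (n → K), g.mulVecLin = f := by
  rw [← isUnit_toLin'_iff, toLin'_apply']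
  constructor
  · rintro ⟨u, hu⟩
    exact ⟨LinearMap.GeneralLinearGroup.toLinearEquiv u, by rw [← hu]; rfl⟩
  · rintro ⟨f, hf⟩
    rw [hf]
    exact (LinearMap.GeneralLinearGroup.ofLinearEquiv f).isUnit

theorem exists_fromBlocks_map_eq_iff (W W' : Submodule K (m ⊕ n → K)) :
    (∃ (g₁ : Matrix m m K) (g₂ : Matrix n n K), IsUnit g₁ ∧ IsUnit g₂ ∧
        W.map (fromBlocks g₁ 0 0 g₂).mulVecLin = W') ↔
      ∃ (f₁ : (m → K) ≃ₗ[K] m → K) (f₂ : (n → K) ≃ₗ[K] n → K),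
        (W.map (LinearEquiv.sumPiEquivProdPi K m n fun _ => K).toLinearMap).map
            ((f₁ : (m → K) →ₗ[K] m → K).prodMap (f₂ : (n → K) →ₗ[K] n → K)) =
          W'.map (LinearEquiv.sumPiEquivProdPi K m n fun _ => K).toLinearMap := by
  set e := LinearEquiv.sumPiEquivProdPi K m n fun _ => K
  have key : ∀ g₁ g₂, W.map (fromBlocks g₁ 0 0 g₂).mulVecLin = W' ↔
      (W.map e.toLinearMap).map (g₁.mulVecLin.prodMap g₂.mulVecLin) = W'.map e.toLinearMap :=
    fun g₁ g₂ => by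
      rw [← Submodule.map_comp, ← sumPiEquivProdPi_comp_fromBlocks_mulVecLin, Submodule.map_comp,
        (Submodule.map_injective_of_injective e.injective).eq_iff]
  constructor
  · rintro ⟨g₁, g₂, hg₁, hg₂, hW⟩
    obtain ⟨f₁, hf₁⟩ := isUnit_iff_exists_mulVecLin_eq.1 hg₁
    obtain ⟨f₂, hf₂⟩ := isUnit_iff_exists_mulVecLin_eq.1 hg₂
    exact ⟨f₁, f₂, by rwa [key, hf₁, hf₂] at hW⟩
  · rintro ⟨f₁, f₂, hW⟩
    refine ⟨_, _, isUnit_iff_exists_mulVecLin_eq.2 ⟨f₁, LinearMap.mulVecLin_toMatrix' _⟩,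
      isUnit_iff_exists_mulVecLin_eq.2 ⟨f₂, LinearMap.mulVecLin_toMatrix' _⟩, ?_⟩
    rwa [key, LinearMap.mulVecLin_toMatrix', LinearMap.mulVecLin_toMatrix']

end Matrix

theorem stdPlus_eq_comap (p q : ℕ) :
    stdPlus p q p = (ker (LinearMap.snd ℂ (Fin p → ℂ) (Fin q → ℂ))).comap
      (LinearEquiv.sumPiEquivProdPi ℂ (Fin p) (Fin q) fun _ => ℂ).toLinearMap := by
  have : {v | ∃ k : Fin p, (k : ℕ) < p ∧ v = Pi.single (Sum.inl k) 1} =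
      (fun i => Pi.single i 1 : Fin p ⊕ Fin q → Fin p ⊕ Fin q → ℂ) '' range Sum.inl := by
    ext; simp [eq_comm]
  ext x
  rw [stdPlus, this, Pi.mem_span_single_image_iff]
  simp [funext_iff]

theorem stdMinus_eq_comap (p q : ℕ) :
    stdMinus p q q = (ker (LinearMap.fst ℂ (Fin p → ℂ) (Fin q → ℂ))).comap
      (LinearEquiv.sumPiEquivProdPi ℂ (Fin p) (Fin q) fun _ => ℂ).toLinearMap := by
  have : {v | ∃ k : Fin q, (k : ℕ) < q ∧ v = Pi.single (Sum.inr k) 1} =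
      (fun i => Pi.single i 1 : Fin p ⊕ Fin q → Fin p ⊕ Fin q → ℂ) '' range Sum.inr := by
    ext; simp [eq_comm]
  ext x
  rw [stdMinus, this, Pi.mem_span_single_image_iff]
  simp [funext_iff]

theorem K_orbit_on_grassmannian_iff_general (p q r : ℕ)
    (W W' : Submodule ℂ (Fin p ⊕ Fin q → ℂ))
    (hW : Module.finrank ℂ ↥W = r) (hW' : Module.finrank ℂ ↥W' = r) :
    (∃ (g₁ : Matrix (Fin p) (Fin p) ℂ) (g₂ : Matrix (Fin q) (Fin q) ℂ),
        IsUnit g₁ ∧ IsUnit g₂ ∧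
        Submodule.map (Matrix.fromBlocks g₁ 0 0 g₂).mulVecLin W = W') ↔
    (Module.finrank ℂ ↥(W ⊓ stdPlus p q p) = Module.finrank ℂ ↥(W' ⊓ stdPlus p q p) ∧
     Module.finrank ℂ ↥(W ⊓ stdMinus p q q) = Module.finrank ℂ ↥(W' ⊓ stdMinus p q q)) := by
  rw [exists_fromBlocks_map_eq_iff, stdPlus_eq_comap, stdMinus_eq_comap,
    ← Submodule.finrank_map_inf_eq, ← Submodule.finrank_map_inf_eq,
    ← Submodule.finrank_map_inf_eq, ← Submodule.finrank_map_inf_eq]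
  exact Submodule.exists_map_prodMap_eq_iff (by rw [LinearEquiv.finrank_map_eq,
    LinearEquiv.finrank_map_eq, hW, hW'])

/-- two `r`-dimensional subspaces of `ℂ^{p+q}` lie in the same
`K = GL_p × GL_q`-orbit iff the dimensions of their intersections with `V⁺` and
`V⁻` coincide. -/
theorem K_orbit_on_grassmannian_iff (p q r : ℕ) (hr : r ≤ p + q)
    (W W' : Submodule ℂ (Fin p ⊕ Fin q → ℂ))
    (hW : Module.finrank ℂ ↥W = r) (hW' : Module.finrank ℂ ↥W' = r) :
    (∃ (g₁ : Matrix (Fin p) (Fin p) ℂ) (g₂ : Matrix (Fin q) (Fin q) ℂ),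
        IsUnit g₁ ∧ IsUnit g₂ ∧
        Submodule.map (Matrix.fromBlocks g₁ 0 0 g₂).mulVecLin W = W') ↔
    (Module.finrank ℂ ↥(W ⊓ stdPlus p q p) = Module.finrank ℂ ↥(W' ⊓ stdPlus p q p) ∧
     Module.finrank ℂ ↥(W ⊓ stdMinus p q q) = Module.finrank ℂ ↥(W' ⊓ stdMinus p q q)) :=
  K_orbit_on_grassmannian_iff_general p q r W W' hW hW'
end
end
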